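/- arXiv:2504.07973 — 4 statements merged into one kernel-verified Lean document; each statement's English description precedes it below -/
import Mathlib

section
/- Let F be a finite field with q elements where q ≡ 5 (mod 8). Then 4·|S_F^{adv_∞} ∩ S_F^{back_∞}| = |S_F^{adv_∞}| and 4·|S_F^{adv_∞} ∩ S_F^{back_∞}| = |S_F^{back_∞}|; that is, exactly one quarter of the indefinitely advanceable nodes are indefinitely backtrackable, and exactly one quarter of the indefinitely backtrackable nodes are indefinitely advanceable (in particular |S_F^{cyc}| = (1/4)·|S_F^{adv_∞}| and |S_F^{adv_∞}| = |S_F^{back_∞}|). -/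
namespace AGM

variable {K : Type*} [Field K]

/-- A node `(a,b)` is nontrivial if `a`, `b`, `a+b`, `a-b` are all nonzero. -/
def Nontriv (p : K × K) : Prop :=
  p.1 ≠ 0 ∧ p.2 ≠ 0 ∧ p.1 + p.2 ≠ 0 ∧ p.1 - p.2 ≠ 0

/-- AGM advancement between nontrivial nodes: `2c = a + b` and `d² = ab`. -/
def Adv (p q : K × K) : Prop :=
  Nontriv p ∧ Nontriv q ∧ 2 * q.1 = p.1 + p.2 ∧ q.2 ^ 2 = p.1 * p.2

/-- `AdvN n p`: there is a chain of `n` successive AGM advancements through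
nontrivial nodes starting at `p`. -/
def AdvN : ℕ → K × K → Prop
  | 0, p => Nontriv p
  | n + 1, p => ∃ q, Adv p q ∧ AdvN n q

/-- `BackN n p`: there is a chain of `n` successive AGM advancements through
nontrivial nodes ending at `p`. -/
def BackN : ℕ → K × K → Prop
  | 0, p => Nontriv p
  | n + 1, p => ∃ q, Adv q p ∧ BackN n q

/-- Indefinitely advanceable nodes. -/
def AdvInf (p : K × K) : Prop := ∀ n, AdvN n p

/-- Indefinitely backtrackable nodes. -/
def BackInf (p : K × K) : Prop := ∀ n, BackN n p

/-- Nontrivial k-values: `k ∉ {0, 1, -1}`. -/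
def Tk (k : K) : Prop := k ≠ 0 ∧ k ≠ 1 ∧ k ≠ -1

/-- k-advancement: `(1+k₁)² k₂² = 4 k₁` for nontrivial k-values. -/
def kAdv (k₁ k₂ : K) : Prop := Tk k₁ ∧ Tk k₂ ∧ (1 + k₁) ^ 2 * k₂ ^ 2 = 4 * k₁

/-- `TAdvN n k`: a chain of `n` k-advancements within `T_K` starting at `k`. -/
def TAdvN : ℕ → K → Prop
  | 0, k => Tk k
  | n + 1, k => ∃ k₂, kAdv k k₂ ∧ TAdvN n k₂

/-- `TBackN n k`: a chain of `n` k-advancements within `T_K` ending at `k`. -/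
def TBackN : ℕ → K → Prop
  | 0, k => Tk k
  | n + 1, k => ∃ k₁, kAdv k₁ k ∧ TBackN n k₁

/-- Indefinitely advanceable k-values. -/
def TAdvInf (k : K) : Prop := ∀ n, TAdvN n k

/-- Indefinitely backtrackable k-values. -/
def TBackInf (k : K) : Prop := ∀ n, TBackN n k

end AGM

namespace AGMAux
open AGM

variable {F : Type*} [Field F]

/-! ### Square toolkit -/

theorem isSquare_sq_mul' {c : F} (hc : c ≠ 0) (x : F) :
    IsSquare (c ^ 2 * x) ↔ IsSquare x := by
  constructor
  · rintro ⟨y, hy⟩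
    exact ⟨y / c, by field_simp at hy ⊢; linear_combination hy⟩
  · rintro ⟨y, hy⟩
    exact ⟨c * y, by rw [hy]; ring⟩

theorem isSquare_of_mul_left {a b : F} (ha : a ≠ 0) (hsa : IsSquare a)
    (hab : IsSquare (a * b)) : IsSquare b := by
  obtain ⟨x, rfl⟩ := hsa
  have hx : x ≠ 0 := fun h => ha (by simp [h])
  rw [show x * x * b = x ^ 2 * b by ring, isSquare_sq_mul' hx] at hab
  exact hab

theorem not_isSquare_mul {a b : F} (ha : a ≠ 0) (hsa : IsSquare a)
    (hb : ¬IsSquare b) : ¬IsSquare (a * b) := fun h => hb (isSquare_of_mul_left ha hsa h)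

theorem isSquare_neg_iff (hm1 : IsSquare (-1 : F)) (x : F) :
    IsSquare (-x) ↔ IsSquare x := by
  constructor
  · intro h
    have := hm1.mul h
    rwa [show -1 * -x = x by ring] at this
  · intro h
    have := hm1.mul h
    rwa [show -1 * x = -x by ring] at this

theorem isSquare_mul_of_not_not [Fintype F] {a b : F}
    (ha : ¬IsSquare a) (hb : ¬IsSquare b) : IsSquare (a * b) := by
  classical
  have ha0 : a ≠ 0 := fun h => ha (by simp [h])
  have hb0 : b ≠ 0 := fun h => hb (by simp [h])
  have h1 : quadraticChar F a = -1 := quadraticChar_neg_one_iff_not_isSquare.mpr ha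
  have h2 : quadraticChar F b = -1 := quadraticChar_neg_one_iff_not_isSquare.mpr hb
  have : quadraticChar F (a * b) = 1 := by rw [map_mul, h1, h2]; ring
  exact (quadraticChar_one_iff_isSquare (mul_ne_zero ha0 hb0)).mp this

/-! ### Field setup facts from `q ≡ 5 (mod 8)` -/

theorem setup [Fintype F] (h5 : Fintype.card F % 8 = 5) :
    ringChar F ≠ 2 ∧ IsSquare (-1 : F) ∧ ¬IsSquare (2 : F) ∧
      (∀ i : F, i ^ 2 = -1 → ¬IsSquare i) := by
  have hchar : ringChar F ≠ 2 := by
    intro h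
    have := FiniteField.even_card_iff_char_two.mp h
    omega
  refine ⟨hchar, ?_, ?_, ?_⟩
  · rw [FiniteField.isSquare_neg_one_iff]
    omega
  · rw [FiniteField.isSquare_two_iff]
    intro h
    exact h.2 h5
  · intro i hi hsq
    have hi0 : i ≠ 0 := by
      intro h
      apply Ring.two_ne_zero hchar
      rw [h] at hi
      linear_combination (2 : F) * hi
    rw [FiniteField.isSquare_iff hchar hi0] at hsq
    have hdiv : Fintype.card F / 2 = 2 * (2 * (Fintype.card F / 8) + 1) := by omega
    rw [hdiv, pow_mul, hi] at hsq
    have h2 : ((-1 : F)) ^ (2 * (Fintype.card F / 8) + 1) = -1 :=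
      Odd.neg_one_pow ⟨Fintype.card F / 8, by omega⟩
    rw [h2] at hsq
    exact Ring.neg_one_ne_one_of_char_ne_two hchar hsq

/-! ### τ and basic T facts -/

def tau (k : F) : F := (1 - k) / (1 + k)

theorem one_add_ne {k : F} (hk : Tk k) : 1 + k ≠ 0 :=
  fun h => hk.2.2 (by linear_combination h)

theorem one_sub_ne {k : F} (hk : Tk k) : 1 - k ≠ 0 :=
  fun h => hk.2.1 (by linear_combination -h)

theorem tk_tau (h20 : (2 : F) ≠ 0) {k : F} (hk : Tk k) : Tk (tau k) := by
  have ha := one_add_ne hk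
  have hs := one_sub_ne hk
  refine ⟨div_ne_zero hs ha, ?_, ?_⟩
  · intro h
    rw [tau, div_eq_one_iff_eq ha] at h
    have h2 : 2 * k = 0 := by linear_combination -h
    exact hk.1 ((mul_eq_zero.mp h2).resolve_left h20)
  · intro h
    rw [tau, div_eq_iff ha] at h
    exact h20 (by linear_combination h)

theorem tau_tau (h20 : (2 : F) ≠ 0) {k : F} (hk : k ≠ -1) : tau (tau k) = k := by
  have ha : 1 + k ≠ 0 := fun h => hk (by linear_combination h)
  have h1 : 1 + tau k = 2 / (1 + k) := by
    rw [tau]; field_simp; ring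
  have h2 : 1 - tau k = 2 * k / (1 + k) := by
    rw [tau]; field_simp; ring
  rw [tau, h1, h2]
  field_simp

theorem ne_neg_one_of_tk_tau {k : F} (h : Tk (tau k)) : k ≠ -1 := by
  intro hk
  rw [hk] at h
  simp [tau] at h
  exact h.1 rfl

theorem tk_of_tk_tau (h20 : (2 : F) ≠ 0) {k : F} (h : Tk (tau k)) : Tk k := by
  have hm1 : k ≠ -1 := ne_neg_one_of_tk_tau h
  refine ⟨?_, ?_, hm1⟩
  · intro h0
    rw [h0] at h
    simp [tau] at h
    exact h.2.1 rfl
  · intro h0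
    rw [h0] at h
    simp [tau] at h
    exact h.1 rfl

theorem kadv_rev (h20 : (2 : F) ≠ 0) {k₁ k₂ : F} (h : kAdv k₁ k₂) :
    kAdv (tau k₂) (tau k₁) := by
  obtain ⟨hk1, hk2, he⟩ := h
  have ha1 := one_add_ne hk1
  have ha2 := one_add_ne hk2
  refine ⟨tk_tau h20 hk2, tk_tau h20 hk1, ?_⟩
  show (1 + (1 - k₂) / (1 + k₂)) ^ 2 * ((1 - k₁) / (1 + k₁)) ^ 2 = 4 * ((1 - k₂) / (1 + k₂))
  field_simp
  linear_combination 4 * he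

/-! ### The Good predicates -/

def Good (k : F) : Prop := Tk k ∧ ∃ s, s ^ 2 = k ∧ ¬IsSquare (s * (1 + k))

def Good2 (k : F) : Prop := Good k ∧ IsSquare (1 - k ^ 2)

def Good4 (k : F) : Prop := Good k ∧ ∃ t, t ^ 2 = 1 - k ^ 2 ∧ IsSquare t

theorem Good.tk {k : F} (h : Good k) : Tk k := h.1

theorem Good.isSquare {k : F} (h : Good k) : IsSquare k := by
  obtain ⟨_, s, hs, _⟩ := h
  exact ⟨s, by rw [← hs]; ring⟩


/-- Any predecessor of a square is Good. -/
theorem pred_good (h2 : ¬IsSquare (2 : F)) {p k : F} (hpk : kAdv p k)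
    (hk : IsSquare k) : Good p := by
  have h20 : (2 : F) ≠ 0 := fun h => h2 (h ▸ ⟨0, by ring⟩)
  obtain ⟨hp, hkT, he⟩ := hpk
  have hap := one_add_ne hp
  refine ⟨hp, (1 + p) * k / 2, ?_, ?_⟩
  · field_simp
    linear_combination he
  · intro hsq
    have hrw : (1 + p) * k / 2 * (1 + p) = ((1 + p) / 2) ^ 2 * (2 * k) := by
      field_simp
    rw [hrw, isSquare_sq_mul' (div_ne_zero hap h20)] at hsq
    obtain ⟨w, hw⟩ := hk
    have hw0 : w ≠ 0 := by
      intro h; rw [h] at hw; simp at hw; exact hkT.1 hw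
    rw [show (2 : F) * k = w ^ 2 * 2 by rw [hw]; ring,
      isSquare_sq_mul' hw0] at hsq
    exact h2 hsq

/-- Each Good k-value has a Good successor. -/
theorem succ_exists [Fintype F] (h2 : ¬IsSquare (2 : F)) (hm1 : IsSquare (-1 : F))
    (hi4 : ∀ i : F, i ^ 2 = -1 → ¬IsSquare i) {k : F} (hk : Good k) :
    ∃ b, kAdv k b ∧ Good b := by
  have h20 : (2 : F) ≠ 0 := fun h => h2 (h ▸ ⟨0, by ring⟩)
  obtain ⟨hkT, s, hs, hns⟩ := hk
  have hs0 : s ≠ 0 := by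
    intro h; rw [h] at hs; exact hkT.1 (by rw [← hs]; ring)
  have ha := one_add_ne hkT
  set b := 2 * s / (1 + k) with hb
  have heb : (1 + k) ^ 2 * b ^ 2 = 4 * k := by
    rw [hb]; field_simp; linear_combination 4 * hs
  have hb0 : b ≠ 0 := div_ne_zero (mul_ne_zero h20 hs0) ha
  have hbne1 : b ≠ 1 := by
    intro h
    rw [h] at heb
    have h1 : (1 - k) ^ 2 = 0 := by linear_combination heb
    exact hkT.2.1 (by linear_combination -(pow_eq_zero_iff two_ne_zero).mp h1)
  have hbnem1 : b ≠ -1 := by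
    intro h
    rw [h] at heb
    have h1 : (1 - k) ^ 2 = 0 := by linear_combination heb
    exact hkT.2.1 (by linear_combination -(pow_eq_zero_iff two_ne_zero).mp h1)
  have hbT : Tk b := ⟨hb0, hbne1, hbnem1⟩
  have hpb := one_add_ne hbT
  have hsb := one_sub_ne hbT
  have hb2 : 1 - b ^ 2 = ((1 - k) / (1 + k)) ^ 2 := by
    rw [hb]; field_simp; linear_combination -4 * hs
  have hbsq : IsSquare b := by
    have h1 : (1 + k) ^ 2 * b = 2 * (s * (1 + k)) := by
      rw [hb]; field_simp
    have h2' : IsSquare (2 * (s * (1 + k))) := isSquare_mul_of_not_not h2 hns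
    rw [← h1] at h2'
    exact (isSquare_sq_mul' ha b).mp h2'
  obtain ⟨w, hw⟩ := hbsq
  have hw2 : w ^ 2 = b := by rw [hw]; ring
  have hw0 : w ≠ 0 := by
    intro h; rw [h] at hw2; exact hb0 (by rw [← hw2]; ring)
  have hprod : IsSquare ((1 + b) * (1 - b)) := by
    refine ⟨(1 - k) / (1 + k), ?_⟩
    rw [show (1 + b) * (1 - b) = 1 - b ^ 2 by ring, hb2]; ring
  by_cases hc : IsSquare (w * (1 + b))
  · -- use -b
    obtain ⟨j, hj⟩ := hm1
    have hj2 : j ^ 2 = -1 := by rw [sq]; exact hj.symm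
    have hjns : ¬IsSquare j := hi4 j hj2
    have hsq1b : IsSquare (w * (1 - b)) := by
      have hpp : IsSquare ((w * (1 + b)) * ((1 + b) * (1 - b))) := hc.mul hprod
      rw [show (w * (1 + b)) * ((1 + b) * (1 - b)) = (1 + b) ^ 2 * (w * (1 - b)) by ring,
        isSquare_sq_mul' hpb] at hpp
      exact hpp
    have hwb0 : w * (1 - b) ≠ 0 := mul_ne_zero hw0 hsb
    refine ⟨-b, ⟨hkT, ⟨neg_ne_zero.mpr hb0, fun h => hbnem1 (by linear_combination -h),
      fun h => hbne1 (by linear_combination -h)⟩, by linear_combination heb⟩,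
      ⟨neg_ne_zero.mpr hb0, fun h => hbnem1 (by linear_combination -h),
      fun h => hbne1 (by linear_combination -h)⟩, j * w, ?_, ?_⟩
    · rw [mul_pow, hj2, hw2]; ring
    · intro hsq
      rw [show j * w * (1 + -b) = (w * (1 - b)) * j by ring] at hsq
      exact not_isSquare_mul hwb0 hsq1b hjns hsq
  · exact ⟨b, ⟨hkT, hbT, heb⟩, hbT, w, hw2, hc⟩

/-- The Good successor is unique. -/
theorem succ_unique [Fintype F] (hm1 : IsSquare (-1 : F))
    (hi4 : ∀ i : F, i ^ 2 = -1 → ¬IsSquare i) {k b b' : F}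
    (hb : kAdv k b) (hgb : Good b) (hb' : kAdv k b') (hgb' : Good b') : b = b' := by
  obtain ⟨hkT, hbT, he⟩ := hb
  obtain ⟨-, hbT', he'⟩ := hb'
  have ha := one_add_ne hkT
  have hfac : (b - b') * (b + b') = 0 := by
    have h4 : (1 + k) ^ 2 * ((b - b') * (b + b')) = 0 := by linear_combination he - he'
    exact (mul_eq_zero.mp h4).resolve_left (pow_ne_zero 2 ha)
  rcases mul_eq_zero.mp hfac with h | h
  · linear_combination h
  -- b' = -b, derive contradiction
  exfalso
  have hb'eq : b' = -b := by linear_combination h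
  obtain ⟨-, σ, hσ, hnσ⟩ := hgb
  obtain ⟨-, σ', hσ', hnσ'⟩ := hgb'
  obtain ⟨j, hj⟩ := hm1
  have hj2 : j ^ 2 = -1 := by rw [sq]; exact hj.symm
  have hjns : ¬IsSquare j := hi4 j hj2
  have hσ0 : σ ≠ 0 := by
    intro hh; rw [hh] at hσ; exact hbT.1 (by rw [← hσ]; ring)
  have hpb := one_add_ne hbT
  have hsb := one_sub_ne hbT
  have hprod : IsSquare ((1 + b) * (1 - b)) := by
    refine ⟨(1 - k) / (1 + k), ?_⟩
    field_simp
    linear_combination -he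
  have hns1b : ¬IsSquare (σ * (1 - b)) := by
    intro hsq
    apply hnσ
    have hpp : IsSquare ((σ * (1 - b)) * ((1 + b) * (1 - b))) := hsq.mul hprod
    rw [show (σ * (1 - b)) * ((1 + b) * (1 - b)) = (1 - b) ^ 2 * (σ * (1 + b)) by ring,
      isSquare_sq_mul' hsb] at hpp
    exact hpp
  -- σ' = ± j σ
  have hfac2 : (σ' - j * σ) * (σ' + j * σ) = 0 := by
    have : σ' ^ 2 = (j * σ) ^ 2 := by
      rw [mul_pow, hj2, hσ, hσ', hb'eq]; ring
    linear_combination this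
  have hsq' : IsSquare (σ' * (1 - b)) := by
    rcases mul_eq_zero.mp hfac2 with hh | hh
    · have : σ' = j * σ := by linear_combination hh
      rw [this, show j * σ * (1 - b) = j * (σ * (1 - b)) by ring]
      exact isSquare_mul_of_not_not hjns hns1b
    · have : σ' = -(j * σ) := by linear_combination hh
      rw [this, show -(j * σ) * (1 - b) = -(j * (σ * (1 - b))) by ring,
        isSquare_neg_iff ⟨j, hj⟩]
      exact isSquare_mul_of_not_not hjns hns1b
  apply hnσ'
  rw [hb'eq, show 1 + -b = 1 - b by ring]
  exact hsq'


/-- A twice-advanceable k-value is Good. -/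
theorem good_of_advN2 (h2 : ¬IsSquare (2 : F)) {k : F} (h : TAdvN 2 k) : Good k := by
  have h20 : (2 : F) ≠ 0 := fun h => h2 (h ▸ ⟨0, by ring⟩)
  obtain ⟨b, hkb, b2, hbb2, -⟩ := h
  obtain ⟨hkT, hbT, he⟩ := hkb
  have ha := one_add_ne hkT
  have hab := one_add_ne hbT
  refine ⟨hkT, b * (1 + k) / 2, ?_, ?_⟩
  · field_simp
    linear_combination he
  · intro hsq
    have hrw : b * (1 + k) / 2 * (1 + k) = ((1 + k) / 2) ^ 2 * (b * 2) := by
      field_simp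
    rw [hrw, isSquare_sq_mul' (div_ne_zero ha h20)] at hsq
    have hbsq : IsSquare b := by
      obtain ⟨-, -, he2⟩ := hbb2
      exact ⟨b2 * (1 + b) / 2, by field_simp; linear_combination -he2⟩
    exact not_isSquare_mul hbT.1 hbsq h2 hsq

theorem advN_of_good [Fintype F] (h2 : ¬IsSquare (2 : F)) (hm1 : IsSquare (-1 : F))
    (hi4 : ∀ i : F, i ^ 2 = -1 → ¬IsSquare i) :
    ∀ n, ∀ k : F, Good k → TAdvN n k := by
  intro n
  induction n with
  | zero => exact fun k hk => hk.1
  | succ n ih =>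
    intro k hk
    obtain ⟨b, hkb, hgb⟩ := succ_exists h2 hm1 hi4 hk
    exact ⟨b, hkb, ih b hgb⟩

theorem tadvinf_iff_good [Fintype F] (h2 : ¬IsSquare (2 : F)) (hm1 : IsSquare (-1 : F))
    (hi4 : ∀ i : F, i ^ 2 = -1 → ¬IsSquare i) (k : F) :
    TAdvInf k ↔ Good k :=
  ⟨fun h => good_of_advN2 h2 (h 2), fun h n => advN_of_good h2 hm1 hi4 n k h⟩

/-! ### Predecessors -/

theorem pred_denom {b t : F} (hbT : Tk b) (ht : t ^ 2 = 1 - b ^ 2) :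
    1 - t ≠ 0 ∧ 1 + t ≠ 0 ∧ t ≠ 0 := by
  refine ⟨fun h => ?_, fun h => ?_, fun h => ?_⟩
  · have : b ^ 2 = 0 := by linear_combination ht + (1 + t) * h
    exact hbT.1 ((pow_eq_zero_iff two_ne_zero).mp this)
  · have : b ^ 2 = 0 := by linear_combination ht + (1 - t) * h
    exact hbT.1 ((pow_eq_zero_iff two_ne_zero).mp this)
  · have hb1 : (b - 1) * (b + 1) = 0 := by
      rw [h] at ht; linear_combination ht
    rcases mul_eq_zero.mp hb1 with hh | hh
    · exact hbT.2.1 (by linear_combination hh)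
    · exact hbT.2.2 (by linear_combination hh)

theorem pred_kadv (h20 : (2 : F) ≠ 0) {b t : F} (hbT : Tk b) (ht : t ^ 2 = 1 - b ^ 2) :
    kAdv ((1 + t) / (1 - t)) b := by
  obtain ⟨hst, hat, ht0⟩ := pred_denom hbT ht
  refine ⟨⟨div_ne_zero hat hst, ?_, ?_⟩, hbT, ?_⟩
  · intro h
    rw [div_eq_one_iff_eq hst] at h
    have h2t : 2 * t = 0 := by linear_combination h
    exact ht0 ((mul_eq_zero.mp h2t).resolve_left h20)
  · intro h
    rw [div_eq_iff hst] at h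
    exact h20 (by linear_combination h)
  · show (1 + (1 + t) / (1 - t)) ^ 2 * b ^ 2 = 4 * ((1 + t) / (1 - t))
    field_simp
    linear_combination 4 * ht

theorem pred_unique (h20 : (2 : F) ≠ 0) {b t x : F} (hbT : Tk b)
    (ht : t ^ 2 = 1 - b ^ 2) (hx : kAdv x b) :
    x = (1 + t) / (1 - t) ∨ x = (1 - t) / (1 + t) := by
  obtain ⟨hst, hat, ht0⟩ := pred_denom hbT ht
  obtain ⟨hxT, -, he⟩ := hx
  have key : ((1 - t) * x - (1 + t)) * ((1 + t) * x - (1 - t)) = 0 := by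
    linear_combination he - (x + 1) ^ 2 * ht
  rcases mul_eq_zero.mp key with h | h
  · left
    rw [eq_div_iff hst]
    linear_combination h
  · right
    rw [eq_div_iff hat]
    linear_combination h

theorem pred_ne (h20 : (2 : F) ≠ 0) {b t : F} (hbT : Tk b) (ht : t ^ 2 = 1 - b ^ 2) :
    (1 + t) / (1 - t) ≠ (1 - t) / (1 + t) := by
  obtain ⟨hst, hat, ht0⟩ := pred_denom hbT ht
  intro h
  rw [div_eq_div_iff hst hat] at h
  have : (2 : F) * (2 * t) = 0 := by linear_combination h
  rcases mul_eq_zero.mp this with hh | hh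
  · exact h20 hh
  · exact ht0 ((mul_eq_zero.mp hh).resolve_left h20)

/-- Any k-value with a predecessor has `1 - k²` a square. -/
theorem sq_of_pred {p b : F} (hpb : kAdv p b) : IsSquare (1 - b ^ 2) := by
  obtain ⟨hpT, -, he⟩ := hpb
  have hap := one_add_ne hpT
  exact ⟨(1 - p) / (1 + p), by field_simp; linear_combination -he⟩

/-- If `p` advances to `b` and `1 - p²` is a square then `1 - b²` is a fourth power. -/
theorem good4_wit_of_pred {p b : F} (hpb : kAdv p b) (hp2 : IsSquare (1 - p ^ 2)) :
    ∃ t, t ^ 2 = 1 - b ^ 2 ∧ IsSquare t := by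
  obtain ⟨hpT, -, he⟩ := hpb
  have hap := one_add_ne hpT
  refine ⟨(1 - p) / (1 + p), by field_simp; linear_combination he, ?_⟩
  have hrw : (1 - p) / (1 + p) = (1 / (1 + p)) ^ 2 * (1 - p ^ 2) := by
    field_simp; ring
  rw [hrw, isSquare_sq_mul' (one_div_ne_zero hap)]
  exact hp2

/-- Each Good4 k-value has a Good4 predecessor. -/
theorem pred_good4 [Fintype F] (h2 : ¬IsSquare (2 : F)) (hm1 : IsSquare (-1 : F))
    (hi4 : ∀ i : F, i ^ 2 = -1 → ¬IsSquare i) {k : F} (h : Good4 k) :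
    ∃ p, kAdv p k ∧ Good4 p := by
  have h20 : (2 : F) ≠ 0 := fun hh => h2 (hh ▸ ⟨0, by ring⟩)
  obtain ⟨hg, t, ht, hst⟩ := h
  have hkT := hg.tk
  have hksq := hg.isSquare
  obtain ⟨hst1, hat1, ht0⟩ := pred_denom hkT ht
  obtain ⟨w, hw⟩ := hst
  have hw2 : w ^ 2 = t := by rw [hw]; ring
  have hw0 : w ≠ 0 := by
    intro hh; rw [hh] at hw2; exact ht0 (by rw [← hw2]; ring)
  have hmt : (-t) ^ 2 = 1 - k ^ 2 := by linear_combination ht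
  have hk1 : kAdv ((1 + t) / (1 - t)) k := pred_kadv h20 hkT ht
  have hk2 : kAdv ((1 - t) / (1 + t)) k := by
    have hh := pred_kadv h20 hkT hmt
    rwa [show 1 + -t = 1 - t by ring, show 1 - -t = 1 + t by ring] at hh
  by_cases hc : IsSquare (w * (1 - t))
  · obtain ⟨j, hj⟩ := hm1
    have hj2 : j ^ 2 = -1 := by rw [sq]; exact hj.symm
    have hjns : ¬IsSquare j := hi4 j hj2
    refine ⟨(1 + t) / (1 - t), hk1, pred_good h2 hk1 hksq, 2 * j * w / (1 - t), ?_, ?_⟩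
    · field_simp
      linear_combination 4 * w ^ 2 * hj2 - 4 * hw2
    · have hrw : 2 * j * w / (1 - t) = (1 / (1 - t)) ^ 2 * (2 * ((w * (1 - t)) * j)) := by
        field_simp
      rw [hrw, isSquare_sq_mul' (one_div_ne_zero hst1)]
      exact isSquare_mul_of_not_not h2 (not_isSquare_mul (mul_ne_zero hw0 hst1) hc hjns)
  · refine ⟨(1 - t) / (1 + t), hk2, pred_good h2 hk2 hksq, 2 * w / (1 + t), ?_, ?_⟩
    · field_simp
      linear_combination 4 * hw2
    · have hnsq : ¬IsSquare (w * (1 + t)) := by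
        intro hsq
        apply hc
        have hprod : IsSquare ((w * (1 + t)) * (w * (1 - t))) :=
          ⟨w * k, by linear_combination (-(w ^ 2)) * ht⟩
        exact isSquare_of_mul_left (mul_ne_zero hw0 hat1) hsq hprod
      have hrw : 2 * w / (1 + t) = (1 / (1 + t)) ^ 2 * (2 * (w * (1 + t))) := by
        field_simp
      rw [hrw, isSquare_sq_mul' (one_div_ne_zero hat1)]
      exact isSquare_mul_of_not_not h2 hnsq

theorem backN_of_good4 [Fintype F] (h2 : ¬IsSquare (2 : F)) (hm1 : IsSquare (-1 : F))
    (hi4 : ∀ i : F, i ^ 2 = -1 → ¬IsSquare i) :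
    ∀ n, ∀ k : F, Good4 k → TBackN n k := by
  intro n
  induction n with
  | zero => exact fun k hk => hk.1.1
  | succ n ih =>
    intro k hk
    obtain ⟨p, hpk, hgp⟩ := pred_good4 h2 hm1 hi4 hk
    exact ⟨p, hpk, ih p hgp⟩

theorem inf_iff_good4 [Fintype F] (h2 : ¬IsSquare (2 : F)) (hm1 : IsSquare (-1 : F))
    (hi4 : ∀ i : F, i ^ 2 = -1 → ¬IsSquare i) (k : F) :
    (TAdvInf k ∧ TBackInf k) ↔ Good4 k := by
  constructor
  · rintro ⟨ha, hb⟩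
    obtain ⟨p, hpk, p₀, hp0, -⟩ := hb 2
    exact ⟨(tadvinf_iff_good h2 hm1 hi4 k).mp ha, good4_wit_of_pred hpk (sq_of_pred hp0)⟩
  · intro h
    exact ⟨(tadvinf_iff_good h2 hm1 hi4 k).mpr h.1,
      fun n => backN_of_good4 h2 hm1 hi4 n k h⟩

/-! ### Backtracking via τ -/

theorem tbackN_iff_tadvN_tau (h20 : (2 : F) ≠ 0) :
    ∀ n, ∀ k : F, TBackN n k ↔ TAdvN n (tau k) := by
  intro n
  induction n with
  | zero =>
    exact fun k => ⟨fun h => tk_tau h20 h, fun h => tk_of_tk_tau h20 h⟩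
  | succ n ih =>
    intro k
    constructor
    · rintro ⟨k₁, hk₁, hb⟩
      exact ⟨tau k₁, kadv_rev h20 hk₁, (ih k₁).mp hb⟩
    · rintro ⟨l, hl, ha⟩
      have hkm1 : k ≠ -1 := by
        intro hh
        have := hl.1.1
        rw [hh] at this
        simp [tau] at this
      have hlm1 : l ≠ -1 := hl.2.1.2.2
      have h1 : kAdv (tau l) k := by
        have hh := kadv_rev h20 hl
        rwa [tau_tau h20 hkm1] at hh
      refine ⟨tau l, h1, (ih (tau l)).mpr ?_⟩
      rwa [tau_tau h20 hlm1]

theorem tbackinf_iff_good_tau [Fintype F] (h2 : ¬IsSquare (2 : F)) (hm1 : IsSquare (-1 : F))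
    (hi4 : ∀ i : F, i ^ 2 = -1 → ¬IsSquare i) (k : F) :
    TBackInf k ↔ Good (tau k) := by
  have h20 : (2 : F) ≠ 0 := fun hh => h2 (hh ▸ ⟨0, by ring⟩)
  constructor
  · intro h
    exact (tadvinf_iff_good h2 hm1 hi4 (tau k)).mp
      (fun n => (tbackN_iff_tadvN_tau h20 n k).mp (h n))
  · intro h n
    exact (tbackN_iff_tadvN_tau h20 n k).mpr
      ((tadvinf_iff_good h2 hm1 hi4 (tau k)).mpr h n)

/-! ### Counting -/

open Classical in
/-- The Good successor (junk value if none exists). -/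
noncomputable def gsucc (k : F) : F :=
  if h : ∃ b, kAdv k b ∧ Good b then h.choose else 0

theorem gsucc_spec {k : F} (h : ∃ b, kAdv k b ∧ Good b) :
    kAdv k (gsucc k) ∧ Good (gsucc k) := by
  rw [gsucc, dif_pos h]
  exact h.choose_spec

theorem gsucc_eq [Fintype F] (hm1 : IsSquare (-1 : F))
    (hi4 : ∀ i : F, i ^ 2 = -1 → ¬IsSquare i) {k b : F}
    (hb : kAdv k b) (hgb : Good b) : gsucc k = b := by
  have hs := gsucc_spec ⟨b, hb, hgb⟩
  exact succ_unique hm1 hi4 hs.1 hs.2 hb hgb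

theorem card_two_mul {α : Type*} [DecidableEq α] (S S' : Finset α) (f : α → α)
    (h1 : ∀ a ∈ S, f a ∈ S')
    (h2 : ∀ b ∈ S', ∃ p₁ p₂, p₁ ≠ p₂ ∧ S.filter (fun a => f a = b) = {p₁, p₂}) :
    S.card = 2 * S'.card := by
  rw [Finset.card_eq_sum_card_fiberwise h1]
  have hc : ∑ b ∈ S', (S.filter fun a => f a = b).card = ∑ _b ∈ S', 2 :=
    Finset.sum_congr rfl fun b hb => by
      obtain ⟨p₁, p₂, hne, he⟩ := h2 b hb
      rw [he, Finset.card_pair hne]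
  rw [hc, Finset.sum_const, smul_eq_mul, mul_comm]

theorem card_good_eq_four [Fintype F] (h2 : ¬IsSquare (2 : F)) (hm1 : IsSquare (-1 : F))
    (hi4 : ∀ i : F, i ^ 2 = -1 → ¬IsSquare i) :
    Nat.card {k : F // Good k} = 4 * Nat.card {k : F // Good4 k} := by
  classical
  have h20 : (2 : F) ≠ 0 := fun hh => h2 (hh ▸ ⟨0, by ring⟩)
  set Sg : Finset F := Finset.univ.filter Good with hSg
  set S2 : Finset F := Finset.univ.filter Good2 with hS2
  set S4 : Finset F := Finset.univ.filter Good4 with hS4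
  have step1 : Sg.card = 2 * S2.card := by
    apply card_two_mul Sg S2 gsucc
    · intro a ha
      rw [hSg, Finset.mem_filter] at ha
      have hs := gsucc_spec (succ_exists h2 hm1 hi4 ha.2)
      rw [hS2, Finset.mem_filter]
      exact ⟨Finset.mem_univ _, hs.2, sq_of_pred hs.1⟩
    · intro b hb
      rw [hS2, Finset.mem_filter] at hb
      obtain ⟨-, hgb, hsq⟩ := hb
      obtain ⟨r, hr⟩ := hsq
      have ht : r ^ 2 = 1 - b ^ 2 := by rw [sq, ← hr]
      have hbT := hgb.tk
      obtain ⟨hst1, hat1, ht0⟩ := pred_denom hbT ht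
      have hmt : (-r) ^ 2 = 1 - b ^ 2 := by linear_combination ht
      refine ⟨(1 + r) / (1 - r), (1 - r) / (1 + r), pred_ne h20 hbT ht, ?_⟩
      ext x
      simp only [Finset.mem_filter, Finset.mem_univ, true_and, Finset.mem_insert,
        Finset.mem_singleton, hSg]
      constructor
      · rintro ⟨hgx, hfx⟩
        have hs := gsucc_spec (succ_exists h2 hm1 hi4 hgx)
        rw [hfx] at hs
        exact pred_unique h20 hbT ht hs.1
      · rintro (rfl | rfl)
        · have hk1 := pred_kadv h20 hbT ht
          exact ⟨pred_good h2 hk1 hgb.isSquare, gsucc_eq hm1 hi4 hk1 hgb⟩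
        · have hk2 : kAdv ((1 - r) / (1 + r)) b := by
            have hh := pred_kadv h20 hbT hmt
            rwa [show 1 + -r = 1 - r by ring, show 1 - -r = 1 + r by ring] at hh
          exact ⟨pred_good h2 hk2 hgb.isSquare, gsucc_eq hm1 hi4 hk2 hgb⟩
  have step2 : S2.card = 2 * S4.card := by
    apply card_two_mul S2 S4 gsucc
    · intro a ha
      rw [hS2, Finset.mem_filter] at ha
      obtain ⟨-, hga, hsqa⟩ := ha
      have hs := gsucc_spec (succ_exists h2 hm1 hi4 hga)
      rw [hS4, Finset.mem_filter]
      exact ⟨Finset.mem_univ _, hs.2, good4_wit_of_pred hs.1 hsqa⟩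
    · intro b hb
      rw [hS4, Finset.mem_filter] at hb
      obtain ⟨-, hgb, t, ht, hst⟩ := hb
      have hbT := hgb.tk
      obtain ⟨hst1, hat1, ht0⟩ := pred_denom hbT ht
      have hmt : (-t) ^ 2 = 1 - b ^ 2 := by linear_combination ht
      refine ⟨(1 + t) / (1 - t), (1 - t) / (1 + t), pred_ne h20 hbT ht, ?_⟩
      ext x
      simp only [Finset.mem_filter, Finset.mem_univ, true_and, Finset.mem_insert,
        Finset.mem_singleton, hS2]
      constructor
      · rintro ⟨⟨hgx, -⟩, hfx⟩
        have hs := gsucc_spec (succ_exists h2 hm1 hi4 hgx)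
        rw [hfx] at hs
        exact pred_unique h20 hbT ht hs.1
      · rintro (rfl | rfl)
        · have hk1 := pred_kadv h20 hbT ht
          refine ⟨⟨pred_good h2 hk1 hgb.isSquare, ?_⟩, gsucc_eq hm1 hi4 hk1 hgb⟩
          have hrw : 1 - ((1 + t) / (1 - t)) ^ 2 = (2 / (1 - t)) ^ 2 * (-t) := by
            field_simp; ring
          rw [hrw, isSquare_sq_mul' (div_ne_zero h20 hst1)]
          exact (isSquare_neg_iff hm1 t).mpr hst
        · have hk2 : kAdv ((1 - t) / (1 + t)) b := by
            have hh := pred_kadv h20 hbT hmt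
            rwa [show 1 + -t = 1 - t by ring, show 1 - -t = 1 + t by ring] at hh
          refine ⟨⟨pred_good h2 hk2 hgb.isSquare, ?_⟩, gsucc_eq hm1 hi4 hk2 hgb⟩
          have hrw : 1 - ((1 - t) / (1 + t)) ^ 2 = (2 / (1 + t)) ^ 2 * t := by
            field_simp; ring
          rw [hrw, isSquare_sq_mul' (div_ne_zero h20 hat1)]
          exact hst
  have hcg : Nat.card {k : F // Good k} = Sg.card := by
    rw [Nat.card_eq_fintype_card, Fintype.card_subtype]
  have hc4 : Nat.card {k : F // Good4 k} = S4.card := by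
    rw [Nat.card_eq_fintype_card, Fintype.card_subtype]
  rw [hcg, hc4, step1, step2]
  ring

/-! ### τ-symmetry count -/

def tauEquiv (h20 : (2 : F) ≠ 0) : {k : F // Good (tau k)} ≃ {k : F // Good k} where
  toFun x := ⟨tau x.1, x.2⟩
  invFun y := ⟨tau y.1, by rw [tau_tau h20 y.2.tk.2.2]; exact y.2⟩
  left_inv x := Subtype.ext (tau_tau h20 (ne_neg_one_of_tk_tau x.2.tk))
  right_inv y := Subtype.ext (tau_tau h20 y.2.tk.2.2)

/-! ### Node-level transfer -/

theorem nontriv_iff {a k : F} (ha : a ≠ 0) : Nontriv (a, k * a) ↔ Tk k := by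
  constructor
  · rintro ⟨-, h1, h2, h3⟩
    refine ⟨fun h => h1 (by rw [h, zero_mul]), fun h => ?_, fun h => ?_⟩
    · exact h3 (by rw [h]; ring_nf)
    · exact h2 (by rw [h]; ring_nf)
  · rintro ⟨h0, h1, hm⟩
    refine ⟨ha, mul_ne_zero h0 ha, fun h => hm ?_, fun h => h1 ?_⟩
    · have hz : (1 + k) * a = 0 := by linear_combination h
      have h2 := (mul_eq_zero.mp hz).resolve_right ha
      linear_combination h2
    · have hz : (1 - k) * a = 0 := by linear_combination h
      have h2 := (mul_eq_zero.mp hz).resolve_right ha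
      linear_combination -h2

theorem advN_node (h20 : (2 : F) ≠ 0) :
    ∀ n, ∀ a k : F, a ≠ 0 → (AdvN n (a, k * a) ↔ TAdvN n k) := by
  intro n
  induction n with
  | zero => exact fun a k ha => nontriv_iff ha
  | succ n ih =>
    intro a k ha
    constructor
    · rintro ⟨⟨c, d⟩, ⟨hp, hq, h1, h2⟩, hAdvN⟩
      have hc0 : c ≠ 0 := hq.1
      have hd : d = d / c * c := by field_simp
      set k₂ := d / c with hk₂
      have hdc : k₂ * c = d := by rw [hk₂]; field_simp
      refine ⟨k₂, ⟨(nontriv_iff ha).mp hp, (nontriv_iff hc0).mp (hd ▸ hq), ?_⟩,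
        (ih c k₂ hc0).mp (hd ▸ hAdvN)⟩
      have e1 : 2 * c = a * (1 + k) := by linear_combination h1
      have e4 : d ^ 2 = k * a ^ 2 := by linear_combination h2
      have e5 : ((1 + k) ^ 2 * k₂ ^ 2) * (c ^ 2 * a ^ 2) = (4 * k) * (c ^ 2 * a ^ 2) := by
        linear_combination ((1 + k) ^ 2 * a ^ 2 * (k₂ * c + d)) * hdc -
          ((1 + k) * a + 2 * c) * d ^ 2 * e1 + 4 * c ^ 2 * e4
      exact mul_right_cancel₀ (mul_ne_zero (pow_ne_zero 2 hc0) (pow_ne_zero 2 ha)) e5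
    · rintro ⟨k₂, ⟨hTk, hTk₂, he⟩, hTAdvN⟩
      have hc0 : a * (1 + k) / 2 ≠ 0 :=
        div_ne_zero (mul_ne_zero ha (one_add_ne hTk)) h20
      refine ⟨(a * (1 + k) / 2, k₂ * (a * (1 + k) / 2)),
        ⟨(nontriv_iff ha).mpr hTk, (nontriv_iff hc0).mpr hTk₂, ?_, ?_⟩,
        (ih _ k₂ hc0).mpr hTAdvN⟩
      · show 2 * (a * (1 + k) / 2) = a + k * a
        field_simp
      · show (k₂ * (a * (1 + k) / 2)) ^ 2 = a * (k * a)
        field_simp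
        linear_combination he
  
theorem backN_node (h20 : (2 : F) ≠ 0) :
    ∀ n, ∀ a k : F, a ≠ 0 → (BackN n (a, k * a) ↔ TBackN n k) := by
  intro n
  induction n with
  | zero => exact fun a k ha => nontriv_iff ha
  | succ n ih =>
    intro a k ha
    constructor
    · rintro ⟨⟨x, y⟩, ⟨hp, hq, h1, h2⟩, hBackN⟩
      have hx0 : x ≠ 0 := hp.1
      have hy : y = y / x * x := by field_simp
      refine ⟨y / x, ⟨(nontriv_iff hx0).mp (hy ▸ hp), (nontriv_iff ha).mp hq, ?_⟩,
        (ih x (y / x) hx0).mp (hy ▸ hBackN)⟩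
      have e1 : 2 * a = x * (1 + y / x) := by
        rw [mul_add, mul_one, mul_div_cancel₀ _ hx0]; linear_combination h1
      have e2 : (k * a) ^ 2 = y / x * x ^ 2 := by
        rw [h2]; field_simp
      have e5 : ((1 + y / x) ^ 2 * k ^ 2) * x ^ 2 = (4 * (y / x)) * x ^ 2 := by
        linear_combination (-(k ^ 2) * (x * (1 + y / x) + 2 * a)) * e1 + 4 * e2
      exact mul_right_cancel₀ (pow_ne_zero 2 hx0) e5
    · rintro ⟨k₁, ⟨hTk₁, hTk, he⟩, hTBackN⟩
      have ha1 : 1 + k₁ ≠ 0 := one_add_ne hTk₁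
      have hx0 : 2 * a / (1 + k₁) ≠ 0 :=
        div_ne_zero (mul_ne_zero h20 ha) (one_add_ne hTk₁)
      refine ⟨(2 * a / (1 + k₁), k₁ * (2 * a / (1 + k₁))),
        ⟨(nontriv_iff hx0).mpr hTk₁, (nontriv_iff ha).mpr hTk, ?_, ?_⟩,
        (ih _ k₁ hx0).mpr hTBackN⟩
      · show 2 * a = 2 * a / (1 + k₁) + k₁ * (2 * a / (1 + k₁))
        field_simp
      · show (k * a) ^ 2 = 2 * a / (1 + k₁) * (k₁ * (2 * a / (1 + k₁)))
        field_simp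
        linear_combination he

theorem advInf_iff (h20 : (2 : F) ≠ 0) (a b : F) :
    AdvInf (a, b) ↔ a ≠ 0 ∧ TAdvInf (b / a) := by
  constructor
  · intro h
    have ha : a ≠ 0 := (h 0).1
    refine ⟨ha, fun n => (advN_node h20 n a (b / a) ha).mp ?_⟩
    rw [div_mul_cancel₀ _ ha]
    exact h n
  · rintro ⟨ha, h⟩ n
    have hh := (advN_node h20 n a (b / a) ha).mpr (h n)
    rwa [div_mul_cancel₀ _ ha] at hh

theorem backInf_iff (h20 : (2 : F) ≠ 0) (a b : F) :
    BackInf (a, b) ↔ a ≠ 0 ∧ TBackInf (b / a) := by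
  constructor
  · intro h
    have ha : a ≠ 0 := (h 0).1
    refine ⟨ha, fun n => (backN_node h20 n a (b / a) ha).mp ?_⟩
    rw [div_mul_cancel₀ _ ha]
    exact h n
  · rintro ⟨ha, h⟩ n
    have hh := (backN_node h20 n a (b / a) ha).mpr (h n)
    rwa [div_mul_cancel₀ _ ha] at hh

def nodeEquiv (P : F × F → Prop) (Q : F → Prop)
    (h : ∀ a b : F, P (a, b) ↔ a ≠ 0 ∧ Q (b / a)) :
    {p : F × F // P p} ≃ {a : F // a ≠ 0} × {k : F // Q k} where
  toFun p :=
    ⟨⟨p.1.1, ((h p.1.1 p.1.2).mp (by rw [Prod.mk.eta]; exact p.2)).1⟩,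
      ⟨p.1.2 / p.1.1, ((h p.1.1 p.1.2).mp (by rw [Prod.mk.eta]; exact p.2)).2⟩⟩
  invFun x :=
    ⟨(x.1.1, x.2.1 * x.1.1),
      (h x.1.1 (x.2.1 * x.1.1)).mpr
        ⟨x.1.2, by rw [mul_div_cancel_right₀ _ x.1.2]; exact x.2.2⟩⟩
  left_inv p := by
    obtain ⟨⟨a, b⟩, hp⟩ := p
    apply Subtype.ext
    show (a, b / a * a) = (a, b)
    rw [div_mul_cancel₀ _ ((h a b).mp hp).1]
  right_inv x := by
    obtain ⟨⟨a, ha⟩, ⟨k, hk⟩⟩ := x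
    apply Prod.ext
    · rfl
    · apply Subtype.ext
      show k * a / a = k
      rw [mul_div_cancel_right₀ _ ha]

end AGMAux


theorem stmt16 {F : Type*} [Field F] [Fintype F] (q : ℕ)
    (hq : Fintype.card F = q) (h5 : q % 8 = 5) :
    4 * Nat.card {p : F × F // AGM.AdvInf p ∧ AGM.BackInf p} =
        Nat.card {p : F × F // AGM.AdvInf p} ∧
    4 * Nat.card {p : F × F // AGM.AdvInf p ∧ AGM.BackInf p} =
        Nat.card {p : F × F // AGM.BackInf p} := by
  subst hq
  obtain ⟨hchar, hm1, h2, hi4⟩ := AGMAux.setup h5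
  have h20 : (2 : F) ≠ 0 := Ring.two_ne_zero hchar
  -- node-level factorizations
  have cA : Nat.card {p : F × F // AGM.AdvInf p} =
      Nat.card {a : F // a ≠ 0} * Nat.card {k : F // AGM.TAdvInf k} := by
    rw [Nat.card_congr (AGMAux.nodeEquiv AGM.AdvInf AGM.TAdvInf
      (fun a b => AGMAux.advInf_iff h20 a b)), Nat.card_prod]
  have cB : Nat.card {p : F × F // AGM.BackInf p} =
      Nat.card {a : F // a ≠ 0} * Nat.card {k : F // AGM.TBackInf k} := by
    rw [Nat.card_congr (AGMAux.nodeEquiv AGM.BackInf AGM.TBackInf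
      (fun a b => AGMAux.backInf_iff h20 a b)), Nat.card_prod]
  have cC : Nat.card {p : F × F // AGM.AdvInf p ∧ AGM.BackInf p} =
      Nat.card {a : F // a ≠ 0} *
        Nat.card {k : F // AGM.TAdvInf k ∧ AGM.TBackInf k} := by
    rw [Nat.card_congr (AGMAux.nodeEquiv (fun p => AGM.AdvInf p ∧ AGM.BackInf p)
      (fun k => AGM.TAdvInf k ∧ AGM.TBackInf k) (fun a b => ?_)), Nat.card_prod]
    constructor
    · rintro ⟨h1, h2⟩
      obtain ⟨ha, h1'⟩ := (AGMAux.advInf_iff h20 a b).mp h1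
      obtain ⟨-, h2'⟩ := (AGMAux.backInf_iff h20 a b).mp h2
      exact ⟨ha, h1', h2'⟩
    · rintro ⟨ha, h1', h2'⟩
      exact ⟨(AGMAux.advInf_iff h20 a b).mpr ⟨ha, h1'⟩,
        (AGMAux.backInf_iff h20 a b).mpr ⟨ha, h2'⟩⟩
  -- k-level identifications
  have k1 : Nat.card {k : F // AGM.TAdvInf k} = Nat.card {k : F // AGMAux.Good k} :=
    Nat.card_congr (Equiv.subtypeEquivRight (AGMAux.tadvinf_iff_good h2 hm1 hi4))
  have k2 : Nat.card {k : F // AGM.TAdvInf k ∧ AGM.TBackInf k} =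
      Nat.card {k : F // AGMAux.Good4 k} :=
    Nat.card_congr (Equiv.subtypeEquivRight (AGMAux.inf_iff_good4 h2 hm1 hi4))
  have k3 : Nat.card {k : F // AGM.TBackInf k} = Nat.card {k : F // AGMAux.Good k} := by
    rw [Nat.card_congr (Equiv.subtypeEquivRight (AGMAux.tbackinf_iff_good_tau h2 hm1 hi4)),
      Nat.card_congr (AGMAux.tauEquiv h20)]
  have k4 := AGMAux.card_good_eq_four h2 hm1 hi4
  constructor
  · rw [cC, cA, k1, k2, k4]
    ring
  · rw [cC, cB, k3, k2, k4]
    ring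
end

section
/- Let K be a field of characteristic ≠ 2 and define σ(k) = (1−k)/(1+k). Then: (i) σ maps T_K = K \ {0,1,−1} into T_K; (ii) σ(σ(k)) = k for every k ∈ T_K; and (iii) for all k₁, k₂ ∈ T_K, k₁ k-advances to k₂ (i.e., (1+k₁)²·k₂² = 4k₁) if and only if σ(k₂) k-advances to σ(k₁) (i.e., (1+σ(k₂))²·σ(k₁)² = 4σ(k₂)). Thus σ is an involution of T_K that switches k-advancement and k-backtracking. -/
theorem stmt17 {K : Type*} [Field K] (hchar : (2 : K) ≠ 0) :
    (∀ k : K, AGM.Tk k → AGM.Tk ((1 - k) / (1 + k))) ∧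
    (∀ k : K, AGM.Tk k →
      (1 - (1 - k) / (1 + k)) / (1 + (1 - k) / (1 + k)) = k) ∧
    (∀ k₁ k₂ : K, AGM.Tk k₁ → AGM.Tk k₂ →
      ((1 + k₁) ^ 2 * k₂ ^ 2 = 4 * k₁ ↔
        (1 + (1 - k₂) / (1 + k₂)) ^ 2 * ((1 - k₁) / (1 + k₁)) ^ 2 =
          4 * ((1 - k₂) / (1 + k₂)))) := by
  have key : ∀ k : K, AGM.Tk k → (1 + k ≠ 0 ∧ 1 - k ≠ 0) := by
    rintro k ⟨h0, h1, hm1⟩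
    constructor
    · intro h; apply hm1; linear_combination h
    · intro h; apply h1; linear_combination -h
  refine ⟨?_, ?_, ?_⟩
  · rintro k hk
    obtain ⟨hp, hm⟩ := key k hk
    obtain ⟨h0, h1, hm1⟩ := hk
    refine ⟨?_, ?_, ?_⟩
    · intro h
      rw [div_eq_zero_iff] at h
      rcases h with h | h
      · exact hm h
      · exact hp h
    · intro h
      rw [div_eq_one_iff_eq hp] at h
      have h2k : 2 * k = 0 := by linear_combination -h
      exact h0 ((mul_eq_zero.mp h2k).resolve_left hchar)
    · intro h
      rw [div_eq_iff hp] at h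
      apply hchar; linear_combination h
  · rintro k hk
    obtain ⟨hp, hm⟩ := key k hk
    have h2 : 1 + (1 - k) / (1 + k) = 2 / (1 + k) := by
      field_simp; ring
    have h3 : 1 - (1 - k) / (1 + k) = 2 * k / (1 + k) := by
      field_simp; ring
    rw [h2, h3, div_div_div_cancel_right₀]
    exact mul_div_cancel_left₀ k hchar
    exact hp
  · rintro k₁ k₂ hk1 hk2
    obtain ⟨hp1, hm1⟩ := key k₁ hk1
    obtain ⟨hp2, hm2⟩ := key k₂ hk2
    have h2 : 1 + (1 - k₂) / (1 + k₂) = 2 / (1 + k₂) := by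
      field_simp; ring
    rw [h2]
    constructor
    · intro h
      field_simp
      linear_combination 4 * h
    · intro h
      field_simp at h
      have hne : (4 : K) * (1 + k₂) ≠ 0 := by
        apply mul_ne_zero _ hp2
        have h4 : (4 : K) = 2 * 2 := by norm_num
        rw [h4]
        exact mul_ne_zero hchar hchar
      have key2 : 4 * (1 + k₂) * ((1 + k₁) ^ 2 * k₂ ^ 2 - 4 * k₁) = 0 := by
        linear_combination (1 + k₂) * h
      have := (mul_eq_zero.mp key2).resolve_left hne
      linear_combination this
end

section
/- Let F be a finite field of odd characteristic with q elements. Then for every integer n ≥ 0: (1) S_F^{adv_n} = S_F^{adv_∞} if and only if S_F^{back_n} = S_F^{back_∞}; (2) S_F^{adv_n} ∩ S_F^{back_∞} = S_F^{cyc} if and only if S_F^{back_n} ∩ S_F^{adv_∞} = S_F^{cyc}; and (3) |S_F^{adv_n}| = |S_F^{back_n}|, and moreover |S_F^{adv_∞}| = |S_F^{back_∞}|. -/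
/-!
The linear map `σ(a, b) = (a + b, a - b)` reverses AGM advancement up to a factor `2`:
if `(a, b) ↦ (c, d)` then `σ(c, d) ↦ σ(a, b) / 2`. Since advancement commutes with scaling by
nonzero constants, `σ` carries `n`-times advanceable nodes bijectively onto `n`-times backtrackable
ones and vice versa (`σ ∘ σ = 2`), which transports every set equality and cardinality between
the two sides.
-/

namespace AGM

variable {K : Type*} [Field K]

def sumDiff (p : K × K) : K × K := (p.1 + p.2, p.1 - p.2)

theorem sumDiff_sumDiff (p : K × K) : sumDiff (sumDiff p) = (2 : K) • p :=
  Prod.ext (by simp only [sumDiff, Prod.smul_fst, smul_eq_mul]; ring)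
    (by simp only [sumDiff, Prod.smul_snd, smul_eq_mul]; ring)

theorem sumDiff_smul (t : K) (p : K × K) : sumDiff (t • p) = t • sumDiff p :=
  Prod.ext (by simp only [sumDiff, Prod.smul_fst, Prod.smul_snd, smul_eq_mul]; ring)
    (by simp only [sumDiff, Prod.smul_fst, Prod.smul_snd, smul_eq_mul]; ring)

theorem Nontriv.smul {t : K} (ht : t ≠ 0) {p : K × K} (hp : Nontriv p) : Nontriv (t • p) := by
  obtain ⟨h₁, h₂, hadd, hsub⟩ := hp
  simp only [Nontriv, Prod.smul_fst, Prod.smul_snd, smul_eq_mul, ← mul_add, ← mul_sub]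
  exact ⟨mul_ne_zero ht h₁, mul_ne_zero ht h₂, mul_ne_zero ht hadd, mul_ne_zero ht hsub⟩

theorem Nontriv.sumDiff (h2 : (2 : K) ≠ 0) {p : K × K} (hp : Nontriv p) :
    Nontriv (sumDiff p) := by
  obtain ⟨h₁, h₂, hadd, hsub⟩ := hp
  refine ⟨hadd, hsub, ?_, ?_⟩
  · simpa only [AGM.sumDiff, ← two_mul, add_add_sub_cancel] using mul_ne_zero h2 h₁
  · simpa only [AGM.sumDiff, ← two_mul, add_sub_sub_cancel] using mul_ne_zero h2 h₂

theorem Adv.smul {t : K} (ht : t ≠ 0) {p q : K × K} (h : Adv p q) : Adv (t • p) (t • q) := by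
  obtain ⟨hp, hq, hmean, hgeom⟩ := h
  refine ⟨hp.smul ht, hq.smul ht, ?_, ?_⟩ <;>
    simp only [Prod.smul_fst, Prod.smul_snd, smul_eq_mul]
  · linear_combination t * hmean
  · linear_combination t ^ 2 * hgeom

theorem Adv.sumDiff (h2 : (2 : K) ≠ 0) {p q : K × K} (h : Adv p q) :
    Adv (sumDiff q) ((2 : K)⁻¹ • sumDiff p) := by
  obtain ⟨hp, hq, hmean, hgeom⟩ := h
  refine ⟨hq.sumDiff h2, (hp.sumDiff h2).smul (inv_ne_zero h2), ?_, ?_⟩ <;>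
    simp only [AGM.sumDiff, Prod.smul_fst, Prod.smul_snd, smul_eq_mul]
  · field_simp
    linear_combination -hmean
  · have hc : q.1 = (p.1 + p.2) / 2 := by field_simp; linear_combination hmean
    rw [hc]
    field_simp
    linear_combination 4 * hgeom

theorem AdvN.smul {t : K} (ht : t ≠ 0) {n : ℕ} {p : K × K} (h : AdvN n p) :
    AdvN n (t • p) := by
  induction n generalizing p with
  | zero => exact Nontriv.smul ht h
  | succ n ih =>
    obtain ⟨q, hpq, hq⟩ := h
    exact ⟨t • q, hpq.smul ht, ih hq⟩

theorem BackN.smul {t : K} (ht : t ≠ 0) {n : ℕ} {p : K × K} (h : BackN n p) :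
    BackN n (t • p) := by
  induction n generalizing p with
  | zero => exact Nontriv.smul ht h
  | succ n ih =>
    obtain ⟨q, hqp, hq⟩ := h
    exact ⟨t • q, hqp.smul ht, ih hq⟩

theorem BackN.sumDiff (h2 : (2 : K) ≠ 0) {n : ℕ} {p : K × K} (h : BackN n p) :
    AdvN n (sumDiff p) := by
  induction n generalizing p with
  | zero => exact Nontriv.sumDiff h2 h
  | succ n ih =>
    obtain ⟨q, hqp, hq⟩ := h
    exact ⟨_, hqp.sumDiff h2, (ih hq).smul (inv_ne_zero h2)⟩

theorem AdvN.sumDiff (h2 : (2 : K) ≠ 0) {n : ℕ} {p : K × K} (h : AdvN n p) :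
    BackN n (sumDiff p) := by
  induction n generalizing p with
  | zero => exact Nontriv.sumDiff h2 h
  | succ n ih =>
    obtain ⟨q, hpq, hq⟩ := h
    have hback : BackN (n + 1) ((2 : K)⁻¹ • AGM.sumDiff p) := ⟨_, hpq.sumDiff h2, ih hq⟩
    simpa only [smul_inv_smul₀ h2] using hback.smul h2

theorem backN_sumDiff_iff (h2 : (2 : K) ≠ 0) {n : ℕ} {p : K × K} :
    BackN n (sumDiff p) ↔ AdvN n p := by
  refine ⟨fun h => ?_, AdvN.sumDiff h2⟩
  simpa only [sumDiff_sumDiff, inv_smul_smul₀ h2] using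
    (h.sumDiff h2).smul (inv_ne_zero h2)

theorem advN_sumDiff_iff (h2 : (2 : K) ≠ 0) {n : ℕ} {p : K × K} :
    AdvN n (sumDiff p) ↔ BackN n p := by
  refine ⟨fun h => ?_, BackN.sumDiff h2⟩
  simpa only [sumDiff_sumDiff, inv_smul_smul₀ h2] using
    (h.sumDiff h2).smul (inv_ne_zero h2)

theorem backInf_sumDiff_iff (h2 : (2 : K) ≠ 0) {p : K × K} :
    BackInf (sumDiff p) ↔ AdvInf p :=
  forall_congr' fun _ => backN_sumDiff_iff h2

theorem advInf_sumDiff_iff (h2 : (2 : K) ≠ 0) {p : K × K} :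
    AdvInf (sumDiff p) ↔ BackInf p :=
  forall_congr' fun _ => advN_sumDiff_iff h2

def sumDiffEquiv (h2 : (2 : K) ≠ 0) : (K × K) ≃ (K × K) where
  toFun := sumDiff
  invFun p := (2 : K)⁻¹ • sumDiff p
  left_inv p := by simp only [sumDiff_sumDiff, inv_smul_smul₀ h2]
  right_inv p := by simp only [sumDiff_smul, sumDiff_sumDiff, inv_smul_smul₀ h2]

end AGM

open AGM

theorem stmt18_general {F : Type*} [Field F] (hchar : (2 : F) ≠ 0) :
    ∀ n : ℕ,
      (({p : F × F | AGM.AdvN n p} = {p : F × F | AGM.AdvInf p}) ↔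
        ({p : F × F | AGM.BackN n p} = {p : F × F | AGM.BackInf p})) ∧
      (({p : F × F | AGM.AdvN n p} ∩ {p : F × F | AGM.BackInf p} =
          {p : F × F | AGM.AdvInf p} ∩ {p : F × F | AGM.BackInf p}) ↔
        ({p : F × F | AGM.BackN n p} ∩ {p : F × F | AGM.AdvInf p} =
          {p : F × F | AGM.AdvInf p} ∩ {p : F × F | AGM.BackInf p})) ∧
      (Nat.card {p : F × F // AGM.AdvN n p} =
        Nat.card {p : F × F // AGM.BackN n p}) ∧
      (Nat.card {p : F × F // AGM.AdvInf p} =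
        Nat.card {p : F × F // AGM.BackInf p}) := by
  intro n
  set σ := sumDiffEquiv hchar
  have hinj : Function.Injective (Set.preimage σ) := σ.surjective.preimage_injective
  have hAdvN : {p : F × F | AdvN n p} = σ ⁻¹' {p | BackN n p} :=
    Set.ext fun _ => (backN_sumDiff_iff hchar).symm
  have hAdvInf : {p : F × F | AdvInf p} = σ ⁻¹' {p | BackInf p} :=
    Set.ext fun _ => (backInf_sumDiff_iff hchar).symm
  have hBackInf : {p : F × F | BackInf p} = σ ⁻¹' {p | AdvInf p} :=
    Set.ext fun _ => (advInf_sumDiff_iff hchar).symm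
  have hLeft : {p : F × F | AdvN n p} ∩ {p | BackInf p} =
      σ ⁻¹' ({p | BackN n p} ∩ {p | AdvInf p}) := by
    rw [hAdvN, hBackInf, Set.preimage_inter]
  have hCyc : {p : F × F | AdvInf p} ∩ {p | BackInf p} =
      σ ⁻¹' ({p | AdvInf p} ∩ {p | BackInf p}) :=
    Set.ext fun _ => and_comm.trans
      (and_congr (advInf_sumDiff_iff hchar) (backInf_sumDiff_iff hchar)).symm
  refine ⟨?_, ?_, ?_, ?_⟩
  · exact (Eq.congr hAdvN hAdvInf).trans hinj.eq_iff
  · exact (Eq.congr hLeft hCyc).trans hinj.eq_iff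
  · exact Nat.card_congr (σ.subtypeEquiv fun _ => (backN_sumDiff_iff hchar).symm)
  · exact Nat.card_congr (σ.subtypeEquiv fun _ => (backInf_sumDiff_iff hchar).symm)

theorem stmt18 {F : Type*} [Field F] [Fintype F] (q : ℕ)
    (hq : Fintype.card F = q) (hchar : (2 : F) ≠ 0) :
    ∀ n : ℕ,
      (({p : F × F | AGM.AdvN n p} = {p : F × F | AGM.AdvInf p}) ↔
        ({p : F × F | AGM.BackN n p} = {p : F × F | AGM.BackInf p})) ∧
      (({p : F × F | AGM.AdvN n p} ∩ {p : F × F | AGM.BackInf p} =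
          {p : F × F | AGM.AdvInf p} ∩ {p : F × F | AGM.BackInf p}) ↔
        ({p : F × F | AGM.BackN n p} ∩ {p : F × F | AGM.AdvInf p} =
          {p : F × F | AGM.AdvInf p} ∩ {p : F × F | AGM.BackInf p})) ∧
      (Nat.card {p : F × F // AGM.AdvN n p} =
        Nat.card {p : F × F // AGM.BackN n p}) ∧
      (Nat.card {p : F × F // AGM.AdvInf p} =
        Nat.card {p : F × F // AGM.BackInf p}) :=
  stmt18_general hchar
end

section
/- Let F be a finite field with q elements where q ≡ 3 (mod 4) or q ≡ 5 (mod 8). Then there exists a bijection τ : S_F^{back_∞} → S_F^{adv_∞} such that for all nodes u, v ∈ S_F^{back_∞}, u ↦ v (AGM advancement) if and only if τ(v) ↦ τ(u); that is, the directed graph of AGM advancement restricted to S_F^{back_∞} with all arrows reversed is isomorphic to the directed graph of AGM advancement restricted to S_F^{adv_∞}. -/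
open AGM

namespace AGMProof

/-! ### Square toolkit over finite fields -/

section Squares

variable {F : Type*} [Field F] [Fintype F]

lemma sqmul {a b : F} (ha : IsSquare a) (hb : IsSquare b) : IsSquare (a * b) := by
  obtain ⟨r, hr⟩ := ha; obtain ⟨s, hs⟩ := hb
  exact ⟨r * s, by rw [hr, hs]; ring⟩

lemma sqdiv {a b : F} (ha : a ≠ 0) (hsa : IsSquare a) (hab : IsSquare (a * b)) :
    IsSquare b := by
  obtain ⟨r, hr⟩ := hsa; obtain ⟨s, hs⟩ := hab
  have hr0 : r ≠ 0 := by rintro rfl; exact ha (by rw [hr, mul_zero])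
  have hrr : r * r ≠ 0 := mul_ne_zero hr0 hr0
  refine ⟨s * r⁻¹, mul_left_cancel₀ hrr ?_⟩
  rw [show r * r * b = a * b from by rw [hr], hs]
  field_simp

lemma nonsq_mul {a b : F} (hna : ¬IsSquare a) (hnb : ¬IsSquare b) : IsSquare (a * b) := by
  classical
  have ha0 : a ≠ 0 := by rintro rfl; exact hna ⟨0, by ring⟩
  have hb0 : b ≠ 0 := by rintro rfl; exact hnb ⟨0, by ring⟩
  have hqa : quadraticChar F a = -1 := quadraticChar_neg_one_iff_not_isSquare.mpr hna
  have hqb : quadraticChar F b = -1 := quadraticChar_neg_one_iff_not_isSquare.mpr hnb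
  have : quadraticChar F (a * b) = 1 := by rw [map_mul, hqa, hqb]; ring
  exact (quadraticChar_one_iff_isSquare (mul_ne_zero ha0 hb0)).mp this

lemma xor_of_nonsq {a c : F} (h : ¬IsSquare (a * c)) : IsSquare a ↔ ¬IsSquare c := by
  constructor
  · intro hsa hsc; exact h (sqmul hsa hsc)
  · intro hnc; by_contra hna; exact h (nonsq_mul hna hnc)

lemma neg_both {x : F} (hn1 : ¬IsSquare (-1 : F)) (hx : x ≠ 0)
    (h1 : IsSquare x) (h2 : IsSquare (-x)) : False := by
  have : IsSquare (x * (-1 : F)) := by rw [mul_neg_one]; exact h2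
  exact hn1 (sqdiv hx h1 this)

end Squares

/-! ### Generic AGM lemmas -/

section Generic

variable {F : Type*} [Field F]

lemma nontriv_prod_ne {p : F × F} (h : Nontriv p) : p.1 * p.2 ≠ 0 :=
  mul_ne_zero h.1 h.2.1

lemma nontriv_diff_ne {p : F × F} (h : Nontriv p) : p.1 ^ 2 - p.2 ^ 2 ≠ 0 := by
  intro hc
  have h0 : (p.1 - p.2) * (p.1 + p.2) = 0 := by linear_combination hc
  rcases mul_eq_zero.mp h0 with h' | h'
  · exact h.2.2.2 h'
  · exact h.2.2.1 h'

lemma nontriv_swap {u : F × F} (h : Nontriv u) : Nontriv (u.2, u.1) := by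
  refine ⟨h.2.1, h.1, ?_, ?_⟩
  · show u.2 + u.1 ≠ 0
    intro hc; exact h.2.2.1 (by linear_combination hc)
  · show u.2 - u.1 ≠ 0
    intro hc; exact h.2.2.2 (by linear_combination -hc)

lemma nontriv_negsnd {v : F × F} (h : Nontriv v) : Nontriv (v.1, -v.2) := by
  refine ⟨h.1, neg_ne_zero.mpr h.2.1, ?_, ?_⟩
  · show v.1 + -v.2 ≠ 0
    intro hc; exact h.2.2.2 (by linear_combination hc)
  · show v.1 - -v.2 ≠ 0
    intro hc; exact h.2.2.1 (by linear_combination hc)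

lemma swap_adv {u v : F × F} (h : Adv u v) : Adv (u.2, u.1) v := by
  refine ⟨nontriv_swap h.1, h.2.1, ?_, ?_⟩
  · show 2 * v.1 = u.2 + u.1
    linear_combination h.2.2.1
  · show v.2 ^ 2 = u.2 * u.1
    linear_combination h.2.2.2

lemma neg_adv {u v : F × F} (h : Adv u v) : Adv u (v.1, -v.2) := by
  refine ⟨h.1, nontriv_negsnd h.2.1, ?_, ?_⟩
  · show 2 * v.1 = u.1 + u.2
    exact h.2.2.1
  · show (-v.2) ^ 2 = u.1 * u.2
    linear_combination h.2.2.2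

lemma succs_pair {u v w : F × F} (h2 : (2 : F) ≠ 0) (hv : Adv u v) (hw : Adv u w) :
    w = v ∨ w = (v.1, -v.2) := by
  have h1 : w.1 = v.1 := by
    have a1 := hv.2.2.1; have a2 := hw.2.2.1
    apply mul_left_cancel₀ h2; rw [a1, a2]
  have h2' : (w.2 - v.2) * (w.2 + v.2) = 0 := by
    have a1 := hv.2.2.2; have a2 := hw.2.2.2
    linear_combination a2 - a1
  rcases mul_eq_zero.mp h2' with h' | h'
  · left; exact Prod.ext h1 (by linear_combination h')
  · right; exact Prod.ext h1 (by linear_combination h')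

lemma preds_pair {u v w : F × F} (hu : Adv u v) (hw : Adv w v) :
    w = u ∨ w = (u.2, u.1) := by
  have hsum : w.1 + w.2 = u.1 + u.2 := by
    have a1 := hu.2.2.1; have a2 := hw.2.2.1
    linear_combination a1 - a2
  have hprod : w.1 * w.2 = u.1 * u.2 := by
    have a1 := hu.2.2.2; have a2 := hw.2.2.2
    linear_combination a1 - a2
  have key : (w.1 - u.1) * (w.1 - u.2) = 0 := by linear_combination w.1 * hsum - hprod
  rcases mul_eq_zero.mp key with h' | h'
  · left
    refine Prod.ext (by linear_combination h') ?_
    have hw1 : w.1 = u.1 := by linear_combination h'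
    rw [hw1] at hsum
    linear_combination hsum
  · right
    refine Prod.ext (by show w.1 = u.2; linear_combination h') ?_
    have hw1 : w.1 = u.2 := by linear_combination h'
    rw [hw1] at hsum
    show w.2 = u.1
    linear_combination hsum

lemma adv_of {u : F × F} (h2 : (2 : F) ≠ 0) (hu : Nontriv u) {c d : F}
    (hc : 2 * c = u.1 + u.2) (hd : d ^ 2 = u.1 * u.2) : Adv u (c, d) := by
  have hc0 : c ≠ 0 := by
    rintro rfl; exact hu.2.2.1 (by rw [← hc]; ring)
  have hd0 : d ≠ 0 := by
    rintro rfl; exact nontriv_prod_ne hu (by rw [← hd]; ring)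
  have key : (2 * 2) * ((c + d) * (c - d)) = (u.1 - u.2) ^ 2 := by
    linear_combination (2 * c + u.1 + u.2) * hc - 4 * hd
  have hcd : (c + d) * (c - d) ≠ 0 := by
    intro hz
    apply hu.2.2.2
    have : (u.1 - u.2) ^ 2 = 0 := by rw [← key, hz, mul_zero]
    have h20 : (2 : ℕ) ≠ 0 := by norm_num
    exact (pow_eq_zero_iff h20).mp this
  rcases mul_ne_zero_iff.mp hcd with ⟨hpd, hmd⟩
  exact ⟨hu, ⟨hc0, hd0, hpd, hmd⟩, hc, hd⟩

lemma pred_of {v : F × F} (h2 : (2 : F) ≠ 0) (hv : Nontriv v) {x : F}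
    (hx : x ^ 2 = v.1 ^ 2 - v.2 ^ 2) : Adv (v.1 + x, v.1 - x) v := by
  have hx0 : x ≠ 0 := by
    rintro rfl; exact nontriv_diff_ne hv (by rw [← hx]; ring)
  have hprod : (v.1 + x) * (v.1 - x) = v.2 ^ 2 := by linear_combination -hx
  have h1 : v.1 + x ≠ 0 := by
    intro hz
    apply pow_ne_zero 2 hv.2.1
    rw [← hprod, hz, zero_mul]
  have h1' : v.1 - x ≠ 0 := by
    intro hz
    apply pow_ne_zero 2 hv.2.1
    rw [← hprod, hz, mul_zero]
  refine ⟨⟨h1, h1', ?_, ?_⟩, hv, ?_, ?_⟩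
  · show v.1 + x + (v.1 - x) ≠ 0
    intro hz
    apply hv.1
    apply mul_left_cancel₀ h2
    rw [mul_zero]; linear_combination hz
  · show v.1 + x - (v.1 - x) ≠ 0
    intro hz
    apply hx0
    apply mul_left_cancel₀ h2
    rw [mul_zero]; linear_combination hz
  · show 2 * v.1 = v.1 + x + (v.1 - x)
    ring
  · show v.2 ^ 2 = (v.1 + x) * (v.1 - x)
    linear_combination hx

lemma adv_diff_sq {u v : F × F} (h2 : (2 : F) ≠ 0) (h : Adv u v) :
    IsSquare (v.1 ^ 2 - v.2 ^ 2) := by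
  refine ⟨(u.1 - u.2) * (2 : F)⁻¹, ?_⟩
  have a1 := h.2.2.1; have a2 := h.2.2.2
  field_simp
  linear_combination (2 * v.1 + u.1 + u.2) * a1 - 4 * a2

lemma advinf_prod_sq {u : F × F} (h : AdvInf u) : IsSquare (u.1 * u.2) := by
  obtain ⟨v, hv, -⟩ := h 1
  exact ⟨v.2, by linear_combination -hv.2.2.2⟩

lemma backinf_diff_sq {v : F × F} (h2 : (2 : F) ≠ 0) (h : BackInf v) :
    IsSquare (v.1 ^ 2 - v.2 ^ 2) := by
  obtain ⟨u, hu, -⟩ := h 1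
  exact adv_diff_sq h2 hu

lemma backInf_succ {u v : F × F} (ha : Adv u v) (hb : BackInf u) : BackInf v := by
  intro n
  cases n with
  | zero => exact ha.2.1
  | succ n => exact ⟨u, ha, hb n⟩

lemma advInf_pred {u v : F × F} (ha : Adv u v) (hv : AdvInf v) : AdvInf u := by
  intro n
  cases n with
  | zero => exact ha.1
  | succ n => exact ⟨v, ha, hv n⟩

end Generic

/-! ### Conjugation machinery -/

section Conj

lemma conj_inv_perm {S : Type*} [Fintype S] (φ : Equiv.Perm S) :
    ∃ π : Equiv.Perm S, ∀ s, π (φ.symm s) = φ (π s) := by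
  classical
  have h : IsConj φ⁻¹ φ := by
    rw [Equiv.Perm.isConj_iff_cycleType_eq, Equiv.Perm.cycleType_inv]
  obtain ⟨c, hc⟩ := isConj_iff.mp h
  refine ⟨c, fun s => ?_⟩
  have hc' : c * φ⁻¹ = φ * c := by
    have h1 := congrArg (· * c) hc
    simpa [mul_assoc] using h1
  have := congrArg (fun g : Equiv.Perm S => g s) hc'
  simpa [Equiv.Perm.mul_apply, Equiv.Perm.inv_def] using this

lemma conj1 {X Y S : Type*} [Fintype S] (Ψ : X → X) (Φ : Y → Y) (φ : Equiv.Perm S)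
    (e : S ⊕ S ≃ X) (f : S ⊕ S ≃ Y)
    (hΨ1 : ∀ s, Ψ (e (Sum.inl s)) = e (Sum.inl (φ.symm s)))
    (hΨ2 : ∀ s, Ψ (e (Sum.inr s)) = e (Sum.inl s))
    (hΦ1 : ∀ s, Φ (f (Sum.inl s)) = f (Sum.inl (φ s)))
    (hΦ2 : ∀ s, Φ (f (Sum.inr s)) = f (Sum.inl s)) :
    ∃ τ : X ≃ Y, ∀ x, τ (Ψ x) = Φ (τ x) := by
  obtain ⟨π, hπ⟩ := conj_inv_perm φ
  refine ⟨(e.symm.trans (Equiv.sumCongr π π)).trans f, fun x => ?_⟩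
  obtain ⟨z, rfl⟩ : ∃ z, e z = x := ⟨e.symm x, e.apply_symm_apply x⟩
  cases z with
  | inl s =>
      rw [hΨ1]
      simp only [Equiv.trans_apply, Equiv.symm_apply_apply, Equiv.sumCongr_apply,
        Sum.map_inl]
      rw [hΦ1, hπ s]
  | inr s =>
      rw [hΨ2]
      simp only [Equiv.trans_apply, Equiv.symm_apply_apply, Equiv.sumCongr_apply,
        Sum.map_inl, Sum.map_inr]
      rw [hΦ2]

lemma conj2 {X Y S : Type*} [Fintype S] (Ψ : X → X) (Φ : Y → Y) (φ : Equiv.Perm S)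
    (e : S ⊕ (S ⊕ S × Bool) ≃ X) (f : S ⊕ (S ⊕ S × Bool) ≃ Y)
    (hΨ1 : ∀ s, Ψ (e (Sum.inl s)) = e (Sum.inl (φ.symm s)))
    (hΨ2 : ∀ s, Ψ (e (Sum.inr (Sum.inl s))) = e (Sum.inl s))
    (hΨ3 : ∀ s ε, Ψ (e (Sum.inr (Sum.inr (s, ε)))) = e (Sum.inr (Sum.inl s)))
    (hΦ1 : ∀ s, Φ (f (Sum.inl s)) = f (Sum.inl (φ s)))
    (hΦ2 : ∀ s, Φ (f (Sum.inr (Sum.inl s))) = f (Sum.inl s))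
    (hΦ3 : ∀ s ε, Φ (f (Sum.inr (Sum.inr (s, ε)))) = f (Sum.inr (Sum.inl s))) :
    ∃ τ : X ≃ Y, ∀ x, τ (Ψ x) = Φ (τ x) := by
  obtain ⟨π, hπ⟩ := conj_inv_perm φ
  refine ⟨(e.symm.trans (Equiv.sumCongr π
    (Equiv.sumCongr π (Equiv.prodCongr π (Equiv.refl Bool))))).trans f, fun x => ?_⟩
  obtain ⟨z, rfl⟩ : ∃ z, e z = x := ⟨e.symm x, e.apply_symm_apply x⟩
  rcases z with s | s | ⟨s, ε⟩
  · rw [hΨ1]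
    simp only [Equiv.trans_apply, Equiv.symm_apply_apply, Equiv.sumCongr_apply,
      Sum.map_inl]
    rw [hΦ1, hπ s]
  · rw [hΨ2]
    simp only [Equiv.trans_apply, Equiv.symm_apply_apply, Equiv.sumCongr_apply,
      Sum.map_inl, Sum.map_inr]
    rw [hΦ2]
  · rw [hΨ3]
    simp only [Equiv.trans_apply, Equiv.symm_apply_apply, Equiv.sumCongr_apply,
      Sum.map_inl, Sum.map_inr, Equiv.prodCongr_apply, Prod.map_apply, Equiv.refl_apply]
    rw [hΦ3]

end Conj

/-! ### Assembly -/

section Assemble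

variable {F : Type*} [Field F] [Fintype F]

lemma assemble1 (h2 : (2 : F) ≠ 0)
    (UBex : ∀ v : F × F, BackInf v → ∃ u, Adv u v ∧ BackInf u)
    (UAex : ∀ u : F × F, AdvInf u → ∃ v, Adv u v ∧ AdvInf v)
    (UBuniq : ∀ v u u' : F × F, Adv u v → BackInf u → Adv u' v → BackInf u' → u = u')
    (UAuniq : ∀ u v v' : F × F, Adv u v → AdvInf v → Adv u v' → AdvInf v' → v = v')
    (Asucc : ∀ u v : F × F, Adv u v → AdvInf u)
    (Bpred : ∀ u v : F × F, Adv u v → BackInf v) :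
    ∃ τ : {p : F × F // BackInf p} ≃ {p : F × F // AdvInf p},
      ∀ u v : {p : F × F // BackInf p}, Adv u.1 v.1 ↔ Adv (τ v).1 (τ u).1 := by
  classical
  -- the maps Ψ and Φ
  have hexB : ∀ v : {p : F × F // BackInf p}, ∃ u : {p : F × F // BackInf p}, Adv u.1 v.1 := by
    intro v; obtain ⟨u, h1, hu⟩ := UBex v.1 v.2; exact ⟨⟨u, hu⟩, h1⟩
  choose Ψ hΨ using hexB
  have hexA : ∀ w : {p : F × F // AdvInf p}, ∃ v : {p : F × F // AdvInf p}, Adv w.1 v.1 := by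
    intro w; obtain ⟨v, h1, hv⟩ := UAex w.1 w.2; exact ⟨⟨v, hv⟩, h1⟩
  choose Φ hΦ using hexA
  have Ψeq : ∀ (v u : {p : F × F // BackInf p}), Adv u.1 v.1 → Ψ v = u := by
    intro v u h
    exact Subtype.ext (UBuniq v.1 _ _ (hΨ v) (Ψ v).2 h u.2)
  have Φeq : ∀ (w v : {p : F × F // AdvInf p}), Adv w.1 v.1 → Φ w = v := by
    intro w v h
    exact Subtype.ext (UAuniq w.1 _ _ (hΦ w) (Φ w).2 h v.2)
  -- the cycle set
  let S := {p : F × F // AdvInf p ∧ BackInf p}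
  haveI : Fintype S := Subtype.fintype _
  let iX : S → {p : F × F // BackInf p} := fun s => ⟨s.1, s.2.2⟩
  let iY : S → {p : F × F // AdvInf p} := fun s => ⟨s.1, s.2.1⟩
  let φS : S → S := fun s => ⟨(Φ (iY s)).1, (Φ (iY s)).2, backInf_succ (hΦ (iY s)) s.2.2⟩
  let ψS : S → S := fun s => ⟨(Ψ (iX s)).1, advInf_pred (hΨ (iX s)) s.2.1, (Ψ (iX s)).2⟩
  have hψφ : ∀ s, ψS (φS s) = s := by
    intro s
    have h1 : Ψ (iX (φS s)) = iX s := Ψeq _ _ (hΦ (iY s))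
    have h2'' := congrArg Subtype.val h1
    have h2' : (ψS (φS s)).1 = s.1 := h2''
    exact Subtype.ext h2' 
  have hφψ : ∀ s, φS (ψS s) = s := by
    intro s
    have h1 : Φ (iY (ψS s)) = iY s := Φeq _ _ (hΨ (iX s))
    have h2'' := congrArg Subtype.val h1
    have h2' : (φS (ψS s)).1 = s.1 := h2''
    exact Subtype.ext h2' 
  let φP : Equiv.Perm S := ⟨φS, ψS, hψφ, hφψ⟩
  -- bad successors and predecessors
  have hBex2 : ∀ s : S, ∃ v : {p : F × F // BackInf p}, Adv s.1 v.1 ∧ ¬ AdvInf v.1 := by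
    intro s
    have hadv : Adv s.1 ((Φ (iY s)).1.1, -(Φ (iY s)).1.2) := neg_adv (hΦ (iY s))
    refine ⟨⟨_, backInf_succ hadv s.2.2⟩, hadv, fun hA => ?_⟩
    have heq := UAuniq s.1 _ _ (hΦ (iY s)) (Φ (iY s)).2 hadv hA
    have h0 : (Φ (iY s)).1.2 = -(Φ (iY s)).1.2 := congrArg Prod.snd heq
    have hd0 : (Φ (iY s)).1.2 ≠ 0 := (hΦ (iY s)).2.1.2.1
    apply hd0
    apply mul_left_cancel₀ h2
    rw [mul_zero]
    linear_combination h0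
  choose β hβadv hβnA using hBex2
  have hAex2 : ∀ s : S, ∃ w : {p : F × F // AdvInf p}, Adv w.1 s.1 ∧ ¬ BackInf w.1 := by
    intro s
    have hadv : Adv ((Ψ (iX s)).1.2, (Ψ (iX s)).1.1) s.1 := swap_adv (hΨ (iX s))
    refine ⟨⟨_, advInf_pred hadv s.2.1⟩, hadv, fun hB => ?_⟩
    have heq := UBuniq s.1 _ _ (hΨ (iX s)) (Ψ (iX s)).2 hadv hB
    have h0 : (Ψ (iX s)).1.1 = (Ψ (iX s)).1.2 := congrArg Prod.fst heq
    have hd : (Ψ (iX s)).1.1 - (Ψ (iX s)).1.2 ≠ 0 := (hΨ (iX s)).1.2.2.2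
    apply hd
    linear_combination h0
  choose α hαadv hαnB using hAex2
  -- uniqueness of bad successors/predecessors
  have Buniq2 : ∀ (s : S) (v v' : {p : F × F // BackInf p}),
      Adv s.1 v.1 → ¬AdvInf v.1 → Adv s.1 v'.1 → ¬AdvInf v'.1 → v = v' := by
    intro s v v' h1 hn1 h3 hn3
    rcases succs_pair h2 h1 h3 with h | h
    · exact Subtype.ext h.symm
    · exfalso
      rcases succs_pair h2 h1 (hΦ (iY s)) with hg | hg
      · exact hn1 (hg ▸ (Φ (iY s)).2)
      · apply hn3
        rw [h, ← hg]
        exact (Φ (iY s)).2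
  have Auniq2 : ∀ (s : S) (w w' : {p : F × F // AdvInf p}),
      Adv w.1 s.1 → ¬BackInf w.1 → Adv w'.1 s.1 → ¬BackInf w'.1 → w = w' := by
    intro s w w' h1 hn1 h3 hn3
    rcases preds_pair h1 h3 with h | h
    · exact Subtype.ext h.symm
    · exfalso
      rcases preds_pair h1 (hΨ (iX s)) with hg | hg
      · exact hn1 (hg ▸ (Ψ (iX s)).2)
      · apply hn3
        rw [h, ← hg]
        exact (Ψ (iX s)).2
  -- decomposition of BackInf
  let gB : S ⊕ S → {p : F × F // BackInf p} := Sum.elim iX β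
  have gBinj : Function.Injective gB := by
    rintro (s | s) (s' | s') h
    · simp only [gB, Sum.elim_inl] at h
      have hv0 := congrArg Subtype.val h
      have hv : s.1 = s'.1 := hv0
      exact congrArg Sum.inl (Subtype.ext hv)
    · exfalso
      simp only [gB, Sum.elim_inl, Sum.elim_inr] at h
      apply hβnA s'
      rw [← show (iX s).1 = (β s').1 from congrArg Subtype.val h]
      exact s.2.1
    · exfalso
      simp only [gB, Sum.elim_inl, Sum.elim_inr] at h
      apply hβnA s
      rw [show (β s).1 = (iX s').1 from congrArg Subtype.val h]
      exact s'.2.1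
    · simp only [gB, Sum.elim_inr] at h
      have h1 : Ψ (β s) = iX s := Ψeq _ _ (hβadv s)
      have h2' : Ψ (β s') = iX s' := Ψeq _ _ (hβadv s')
      rw [h] at h1
      rw [h1] at h2'
      have hv0 := congrArg Subtype.val h2'
      have hv : s.1 = s'.1 := hv0
      exact congrArg Sum.inr (Subtype.ext hv)
  have gBsurj : Function.Surjective gB := by
    intro v
    by_cases hA : AdvInf v.1
    · exact ⟨Sum.inl ⟨v.1, hA, v.2⟩, Subtype.ext rfl⟩
    · refine ⟨Sum.inr ⟨(Ψ v).1, Asucc _ _ (hΨ v), (Ψ v).2⟩, ?_⟩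
      exact Buniq2 _ _ _ (hβadv _) (hβnA _) (hΨ v) hA
  let eB := Equiv.ofBijective gB ⟨gBinj, gBsurj⟩
  -- decomposition of AdvInf
  let gA : S ⊕ S → {p : F × F // AdvInf p} := Sum.elim iY α
  have gAinj : Function.Injective gA := by
    rintro (s | s) (s' | s') h
    · simp only [gA, Sum.elim_inl] at h
      have hv0 := congrArg Subtype.val h
      have hv : s.1 = s'.1 := hv0
      exact congrArg Sum.inl (Subtype.ext hv)
    · exfalso
      simp only [gA, Sum.elim_inl, Sum.elim_inr] at h
      apply hαnB s'
      rw [← show (iY s).1 = (α s').1 from congrArg Subtype.val h]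
      exact s.2.2
    · exfalso
      simp only [gA, Sum.elim_inl, Sum.elim_inr] at h
      apply hαnB s
      rw [show (α s).1 = (iY s').1 from congrArg Subtype.val h]
      exact s'.2.2
    · simp only [gA, Sum.elim_inr] at h
      have h1 : Φ (α s) = iY s := Φeq _ _ (hαadv s)
      have h2' : Φ (α s') = iY s' := Φeq _ _ (hαadv s')
      rw [h] at h1
      rw [h1] at h2'
      have hv0 := congrArg Subtype.val h2'
      have hv : s.1 = s'.1 := hv0
      exact congrArg Sum.inr (Subtype.ext hv)
  have gAsurj : Function.Surjective gA := by
    intro w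
    by_cases hB : BackInf w.1
    · exact ⟨Sum.inl ⟨w.1, w.2, hB⟩, Subtype.ext rfl⟩
    · refine ⟨Sum.inr ⟨(Φ w).1, (Φ w).2, Bpred _ _ (hΦ w)⟩, ?_⟩
      exact Auniq2 _ _ _ (hαadv _) (hαnB _) (hΦ w) hB
  let eA := Equiv.ofBijective gA ⟨gAinj, gAsurj⟩
  -- the conjugation equations
  have E1 : ∀ s, Ψ (eB (Sum.inl s)) = eB (Sum.inl (φP.symm s)) := by
    intro s
    exact Ψeq _ _ (hΨ (iX s))
  have E2 : ∀ s, Ψ (eB (Sum.inr s)) = eB (Sum.inl s) := by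
    intro s
    exact Ψeq _ _ (hβadv s)
  have F1 : ∀ s, Φ (eA (Sum.inl s)) = eA (Sum.inl (φP s)) := by
    intro s
    exact Φeq _ _ (hΦ (iY s))
  have F2 : ∀ s, Φ (eA (Sum.inr s)) = eA (Sum.inl s) := by
    intro s
    exact Φeq _ _ (hαadv s)
  obtain ⟨τ, hτ⟩ := conj1 Ψ Φ φP eB eA E1 E2 F1 F2
  refine ⟨τ, fun u v => ?_⟩
  constructor
  · intro h
    have hu : Ψ v = u := Ψeq v u h
    rw [← hu, hτ v]
    exact hΦ (τ v)
  · intro h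
    have h1 : Φ (τ v) = τ u := Φeq (τ v) (τ u) h
    rw [← hτ v] at h1
    have h2' := τ.injective h1
    rw [← h2']
    exact hΨ v

lemma assemble2 (h2 : (2 : F) ≠ 0)
    (UBex : ∀ v : F × F, BackInf v → ∃ u, Adv u v ∧ BackInf u)
    (UAex : ∀ u : F × F, AdvInf u → ∃ v, Adv u v ∧ AdvInf v)
    (UBuniq : ∀ v u u' : F × F, Adv u v → BackInf u → Adv u' v → BackInf u' → u = u')
    (UAuniq : ∀ u v v' : F × F, Adv u v → AdvInf v → Adv u v' → AdvInf v' → v = v')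
    (BprodIff : ∀ u v : F × F, Adv u v → (AdvInf u ↔ IsSquare (v.1 * v.2)))
    (AdiffIff : ∀ u v : F × F, Adv u v → (BackInf v ↔ IsSquare (u.1 ^ 2 - u.2 ^ 2))) :
    ∃ τ : {p : F × F // BackInf p} ≃ {p : F × F // AdvInf p},
      ∀ u v : {p : F × F // BackInf p}, Adv u.1 v.1 ↔ Adv (τ v).1 (τ u).1 := by
  classical
  have hexB : ∀ v : {p : F × F // BackInf p}, ∃ u : {p : F × F // BackInf p}, Adv u.1 v.1 := by
    intro v; obtain ⟨u, h1, hu⟩ := UBex v.1 v.2; exact ⟨⟨u, hu⟩, h1⟩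
  choose Ψ hΨ using hexB
  have hexA : ∀ w : {p : F × F // AdvInf p}, ∃ v : {p : F × F // AdvInf p}, Adv w.1 v.1 := by
    intro w; obtain ⟨v, h1, hv⟩ := UAex w.1 w.2; exact ⟨⟨v, hv⟩, h1⟩
  choose Φ hΦ using hexA
  have Ψeq : ∀ (v u : {p : F × F // BackInf p}), Adv u.1 v.1 → Ψ v = u := by
    intro v u h
    exact Subtype.ext (UBuniq v.1 _ _ (hΨ v) (Ψ v).2 h u.2)
  have Φeq : ∀ (w v : {p : F × F // AdvInf p}), Adv w.1 v.1 → Φ w = v := by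
    intro w v h
    exact Subtype.ext (UAuniq w.1 _ _ (hΦ w) (Φ w).2 h v.2)
  let S := {p : F × F // AdvInf p ∧ BackInf p}
  haveI : Fintype S := Subtype.fintype _
  let iX : S → {p : F × F // BackInf p} := fun s => ⟨s.1, s.2.2⟩
  let iY : S → {p : F × F // AdvInf p} := fun s => ⟨s.1, s.2.1⟩
  let φS : S → S := fun s => ⟨(Φ (iY s)).1, (Φ (iY s)).2, backInf_succ (hΦ (iY s)) s.2.2⟩
  let ψS : S → S := fun s => ⟨(Ψ (iX s)).1, advInf_pred (hΨ (iX s)) s.2.1, (Ψ (iX s)).2⟩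
  have hψφ : ∀ s, ψS (φS s) = s := by
    intro s
    have h1 : Ψ (iX (φS s)) = iX s := Ψeq _ _ (hΦ (iY s))
    have h2'' := congrArg Subtype.val h1
    have h2' : (ψS (φS s)).1 = s.1 := h2''
    exact Subtype.ext h2'
  have hφψ : ∀ s, φS (ψS s) = s := by
    intro s
    have h1 : Φ (iY (ψS s)) = iY s := Φeq _ _ (hΨ (iX s))
    have h2'' := congrArg Subtype.val h1
    have h2' : (φS (ψS s)).1 = s.1 := h2''
    exact Subtype.ext h2'
  let φP : Equiv.Perm S := ⟨φS, ψS, hψφ, hφψ⟩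
  -- bad successors / predecessors of cycle nodes
  have hBex2 : ∀ s : S, ∃ v : {p : F × F // BackInf p}, Adv s.1 v.1 ∧ ¬ AdvInf v.1 := by
    intro s
    have hadv : Adv s.1 ((Φ (iY s)).1.1, -(Φ (iY s)).1.2) := neg_adv (hΦ (iY s))
    refine ⟨⟨_, backInf_succ hadv s.2.2⟩, hadv, fun hA => ?_⟩
    have heq := UAuniq s.1 _ _ (hΦ (iY s)) (Φ (iY s)).2 hadv hA
    have h0 : (Φ (iY s)).1.2 = -(Φ (iY s)).1.2 := congrArg Prod.snd heq
    have hd0 : (Φ (iY s)).1.2 ≠ 0 := (hΦ (iY s)).2.1.2.1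
    apply hd0
    apply mul_left_cancel₀ h2
    rw [mul_zero]
    linear_combination h0
  choose β hβadv hβnA using hBex2
  have hAex2 : ∀ s : S, ∃ w : {p : F × F // AdvInf p}, Adv w.1 s.1 ∧ ¬ BackInf w.1 := by
    intro s
    have hadv : Adv ((Ψ (iX s)).1.2, (Ψ (iX s)).1.1) s.1 := swap_adv (hΨ (iX s))
    refine ⟨⟨_, advInf_pred hadv s.2.1⟩, hadv, fun hB => ?_⟩
    have heq := UBuniq s.1 _ _ (hΨ (iX s)) (Ψ (iX s)).2 hadv hB
    have h0 : (Ψ (iX s)).1.1 = (Ψ (iX s)).1.2 := congrArg Prod.fst heq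
    have hd : (Ψ (iX s)).1.1 - (Ψ (iX s)).1.2 ≠ 0 := (hΨ (iX s)).1.2.2.2
    apply hd
    linear_combination h0
  choose α hαadv hαnB using hAex2
  have Buniq2 : ∀ (s : S) (v v' : {p : F × F // BackInf p}),
      Adv s.1 v.1 → ¬AdvInf v.1 → Adv s.1 v'.1 → ¬AdvInf v'.1 → v = v' := by
    intro s v v' h1 hn1 h3 hn3
    rcases succs_pair h2 h1 h3 with h | h
    · exact Subtype.ext h.symm
    · exfalso
      rcases succs_pair h2 h1 (hΦ (iY s)) with hg | hg
      · exact hn1 (hg ▸ (Φ (iY s)).2)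
      · apply hn3
        rw [h, ← hg]
        exact (Φ (iY s)).2
  have Auniq2 : ∀ (s : S) (w w' : {p : F × F // AdvInf p}),
      Adv w.1 s.1 → ¬BackInf w.1 → Adv w'.1 s.1 → ¬BackInf w'.1 → w = w' := by
    intro s w w' h1 hn1 h3 hn3
    rcases preds_pair h1 h3 with h | h
    · exact Subtype.ext h.symm
    · exfalso
      rcases preds_pair h1 (hΨ (iX s)) with hg | hg
      · exact hn1 (hg ▸ (Ψ (iX s)).2)
      · apply hn3
        rw [h, ← hg]
        exact (Ψ (iX s)).2
  -- basic flags for β and α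
  have hβsq : ∀ s : S, IsSquare ((β s).1.1 * (β s).1.2) :=
    fun s => (BprodIff _ _ (hβadv s)).mp s.2.1
  have hαsq : ∀ s : S, IsSquare ((α s).1.1 ^ 2 - (α s).1.2 ^ 2) :=
    fun s => (AdiffIff _ _ (hαadv s)).mp s.2.2
  -- leaves on the B side
  have hLeafEx : ∀ s : S, ∃ l : Bool → {p : F × F // BackInf p},
      (∀ ε, Adv (β s).1 (l ε).1) ∧ (∀ ε, ¬ AdvInf (l ε).1) ∧
      (∀ ε, ¬ IsSquare ((l ε).1.1 * (l ε).1.2)) ∧ (l true ≠ l false) ∧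
      (∀ v : {p : F × F // BackInf p}, Adv (β s).1 v.1 → v = l true ∨ v = l false) := by
    intro s
    obtain ⟨d, hd⟩ := hβsq s
    have hd0 : d ≠ 0 := by
      rintro rfl; exact nontriv_prod_ne (hβadv s).2.1 (by rw [hd, mul_zero])
    have hN : Nontriv (β s).1 := (hβadv s).2.1
    have hadv : ∀ ε : Bool, Adv (β s).1
        (((β s).1.1 + (β s).1.2) * (2 : F)⁻¹, cond ε d (-d)) := by
      intro ε
      apply adv_of h2 hN
      · field_simp
      · cases ε
        · show (-d) ^ 2 = _
          rw [hd]; ring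
        · show d ^ 2 = _
          rw [hd]; ring
    refine ⟨fun ε => ⟨_, backInf_succ (hadv ε) (β s).2⟩, fun ε => hadv ε, ?_, ?_, ?_, ?_⟩
    · intro ε hA
      exact hβnA s ((BprodIff _ _ (hadv ε)).mpr (advinf_prod_sq hA))
    · intro ε hsq'
      exact hβnA s ((BprodIff _ _ (hadv ε)).mpr hsq')
    · intro hcon
      have h0 : d = -d := congrArg (fun t : {p : F × F // BackInf p} => t.1.2) hcon
      apply hd0
      apply mul_left_cancel₀ h2
      rw [mul_zero]
      linear_combination h0
    · intro v hv
      rcases succs_pair h2 (hadv true) hv with h | h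
      · left; exact Subtype.ext h
      · right; exact Subtype.ext h
  choose Leaf hLadv hLnA hLnsq hLne hLcover using hLeafEx
  -- predecessor leaves on the A side
  have hPredEx : ∀ s : S, ∃ P : Bool → {p : F × F // AdvInf p},
      (∀ ε, Adv (P ε).1 (α s).1) ∧ (∀ ε, ¬ BackInf (P ε).1) ∧
      (∀ ε, ¬ IsSquare ((P ε).1.1 ^ 2 - (P ε).1.2 ^ 2)) ∧ (P true ≠ P false) ∧
      (∀ w : {p : F × F // AdvInf p}, Adv w.1 (α s).1 → w = P true ∨ w = P false) := by
    intro s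
    obtain ⟨x, hx⟩ := hαsq s
    have hx2 : x ^ 2 = (α s).1.1 ^ 2 - (α s).1.2 ^ 2 := by rw [sq]; exact hx.symm
    have hN : Nontriv (α s).1 := (hαadv s).1
    have hadvT : Adv ((α s).1.1 + x, (α s).1.1 - x) (α s).1 := pred_of h2 hN hx2
    have hadvF : Adv ((α s).1.1 - x, (α s).1.1 + x) (α s).1 := swap_adv hadvT
    have hx0 : x ≠ 0 := by
      rintro rfl; exact nontriv_diff_ne hN (by rw [← hx2]; ring)
    have hadv : ∀ ε : Bool, Adv (cond ε ((α s).1.1 + x, (α s).1.1 - x)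
        ((α s).1.1 - x, (α s).1.1 + x)) (α s).1 := by
      intro ε; cases ε
      · exact hadvF
      · exact hadvT
    refine ⟨fun ε => ⟨_, advInf_pred (hadv ε) (α s).2⟩, fun ε => hadv ε, ?_, ?_, ?_, ?_⟩
    · intro ε hB
      exact hαnB s (backInf_succ (hadv ε) hB)
    · intro ε hsq'
      exact hαnB s ((AdiffIff _ _ (hadv ε)).mpr hsq')
    · intro hcon
      have h0 : (α s).1.1 + x = (α s).1.1 - x :=
        congrArg (fun t : {p : F × F // AdvInf p} => t.1.1) hcon
      apply hx0
      apply mul_left_cancel₀ h2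
      rw [mul_zero]
      linear_combination h0
    · intro w hw
      rcases preds_pair hadvT hw with h | h
      · left; exact Subtype.ext h
      · right; exact Subtype.ext h
  choose Pred hPadv hPnB hPnsq hPne hPcover using hPredEx
  -- decomposition of the B side
  let gB : S ⊕ (S ⊕ S × Bool) → {p : F × F // BackInf p} :=
    Sum.elim iX (Sum.elim β (fun z => Leaf z.1 z.2))
  have gBinj : Function.Injective gB := by
    rintro (s | s | ⟨s, ε⟩) (s' | s' | ⟨s', ε'⟩) h <;>
      simp only [gB, Sum.elim_inl, Sum.elim_inr] at h
    · have hv0 := congrArg Subtype.val h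
      have hv : s.1 = s'.1 := hv0
      exact congrArg Sum.inl (Subtype.ext hv)
    · exfalso
      apply hβnA s'
      have hv0 := congrArg Subtype.val h
      have hv : s.1 = (β s').1 := hv0
      rw [← hv]; exact s.2.1
    · exfalso
      apply hLnA s' ε'
      have hv0 := congrArg Subtype.val h
      have hv : s.1 = (Leaf s' ε').1 := hv0
      rw [← hv]; exact s.2.1
    · exfalso
      apply hβnA s
      have hv0 := congrArg Subtype.val h
      have hv : (β s).1 = s'.1 := hv0
      rw [hv]; exact s'.2.1
    · -- β s = β s'
      have h1 : Ψ (β s) = iX s := Ψeq _ _ (hβadv s)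
      have h2' : Ψ (β s') = iX s' := Ψeq _ _ (hβadv s')
      rw [h] at h1
      rw [h1] at h2'
      have hv0 := congrArg Subtype.val h2'
      have hv : s.1 = s'.1 := hv0
      exact congrArg (fun t => Sum.inr (Sum.inl t)) (Subtype.ext hv)
    · exfalso
      apply hLnsq s' ε'
      rw [← h]
      exact hβsq s
    · exfalso
      apply hLnA s ε
      have hv0 := congrArg Subtype.val h
      have hv : (Leaf s ε).1 = s'.1 := hv0
      rw [hv]; exact s'.2.1
    · exfalso
      apply hLnsq s ε
      rw [h]
      exact hβsq s'
    · -- Leaf s ε = Leaf s' ε'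
      have h1 : Ψ (Leaf s ε) = β s := Ψeq _ _ (hLadv s ε)
      have h2' : Ψ (Leaf s' ε') = β s' := Ψeq _ _ (hLadv s' ε')
      rw [h] at h1
      rw [h1] at h2'
      -- β s = β s' hence s = s'
      have h3 : Ψ (β s) = iX s := Ψeq _ _ (hβadv s)
      have h4 : Ψ (β s') = iX s' := Ψeq _ _ (hβadv s')
      rw [h2'] at h3
      rw [h3] at h4
      have hv0 := congrArg Subtype.val h4
      have hv : s.1 = s'.1 := hv0
      have hss : s = s' := Subtype.ext hv
      subst hss
      have hεε : ε = ε' := by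
        cases ε <;> cases ε'
        · rfl
        · exact absurd h.symm (hLne s)
        · exact absurd h (hLne s)
        · rfl
      rw [hεε]
  have gBsurj : Function.Surjective gB := by
    intro v
    by_cases hA : AdvInf v.1
    · exact ⟨Sum.inl ⟨v.1, hA, v.2⟩, Subtype.ext rfl⟩
    by_cases hsq : IsSquare (v.1.1 * v.1.2)
    · refine ⟨Sum.inr (Sum.inl ⟨(Ψ v).1, (BprodIff _ _ (hΨ v)).mpr hsq, (Ψ v).2⟩), ?_⟩
      exact Buniq2 _ _ _ (hβadv _) (hβnA _) (hΨ v) hA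
    · -- leaf node
      have hWnA : ¬ AdvInf (Ψ v).1 := fun hadv => hsq ((BprodIff _ _ (hΨ v)).mp hadv)
      have hWsq : IsSquare ((Ψ v).1.1 * (Ψ v).1.2) :=
        ⟨v.1.2, by linear_combination -(hΨ v).2.2.2⟩
      have hsA : AdvInf (Ψ (Ψ v)).1 := (BprodIff _ _ (hΨ (Ψ v))).mpr hWsq
      have hβs : β ⟨(Ψ (Ψ v)).1, hsA, (Ψ (Ψ v)).2⟩ = Ψ v := by
        apply Buniq2 _ _ _ (hβadv _) (hβnA _) _ hWnA
        exact hΨ (Ψ v)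
      have hv2 : v = Leaf ⟨(Ψ (Ψ v)).1, hsA, (Ψ (Ψ v)).2⟩ true ∨
          v = Leaf ⟨(Ψ (Ψ v)).1, hsA, (Ψ (Ψ v)).2⟩ false := by
        apply hLcover _ v
        rw [hβs]
        exact hΨ v
      rcases hv2 with h | h
      · exact ⟨Sum.inr (Sum.inr (⟨(Ψ (Ψ v)).1, hsA, (Ψ (Ψ v)).2⟩, true)), h.symm⟩
      · exact ⟨Sum.inr (Sum.inr (⟨(Ψ (Ψ v)).1, hsA, (Ψ (Ψ v)).2⟩, false)), h.symm⟩
  let eB := Equiv.ofBijective gB ⟨gBinj, gBsurj⟩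
  -- decomposition of the A side
  let gA : S ⊕ (S ⊕ S × Bool) → {p : F × F // AdvInf p} :=
    Sum.elim iY (Sum.elim α (fun z => Pred z.1 z.2))
  have gAinj : Function.Injective gA := by
    rintro (s | s | ⟨s, ε⟩) (s' | s' | ⟨s', ε'⟩) h <;>
      simp only [gA, Sum.elim_inl, Sum.elim_inr] at h
    · have hv0 := congrArg Subtype.val h
      have hv : s.1 = s'.1 := hv0
      exact congrArg Sum.inl (Subtype.ext hv)
    · exfalso
      apply hαnB s'
      have hv0 := congrArg Subtype.val h
      have hv : s.1 = (α s').1 := hv0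
      rw [← hv]; exact s.2.2
    · exfalso
      apply hPnB s' ε'
      have hv0 := congrArg Subtype.val h
      have hv : s.1 = (Pred s' ε').1 := hv0
      rw [← hv]; exact s.2.2
    · exfalso
      apply hαnB s
      have hv0 := congrArg Subtype.val h
      have hv : (α s).1 = s'.1 := hv0
      rw [hv]; exact s'.2.2
    · have h1 : Φ (α s) = iY s := Φeq _ _ (hαadv s)
      have h2' : Φ (α s') = iY s' := Φeq _ _ (hαadv s')
      rw [h] at h1
      rw [h1] at h2'
      have hv0 := congrArg Subtype.val h2'
      have hv : s.1 = s'.1 := hv0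
      exact congrArg (fun t => Sum.inr (Sum.inl t)) (Subtype.ext hv)
    · exfalso
      apply hPnsq s' ε'
      rw [← h]
      exact hαsq s
    · exfalso
      apply hPnB s ε
      have hv0 := congrArg Subtype.val h
      have hv : (Pred s ε).1 = s'.1 := hv0
      rw [hv]; exact s'.2.2
    · exfalso
      apply hPnsq s ε
      rw [h]
      exact hαsq s'
    · have h1 : Φ (Pred s ε) = α s := Φeq _ _ (hPadv s ε)
      have h2' : Φ (Pred s' ε') = α s' := Φeq _ _ (hPadv s' ε')
      rw [h] at h1
      rw [h1] at h2'
      have h3 : Φ (α s) = iY s := Φeq _ _ (hαadv s)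
      have h4 : Φ (α s') = iY s' := Φeq _ _ (hαadv s')
      rw [h2'] at h3
      rw [h3] at h4
      have hv0 := congrArg Subtype.val h4
      have hv : s.1 = s'.1 := hv0
      have hss : s = s' := Subtype.ext hv
      subst hss
      have hεε : ε = ε' := by
        cases ε <;> cases ε'
        · rfl
        · exact absurd h.symm (hPne s)
        · exact absurd h (hPne s)
        · rfl
      rw [hεε]
  have gAsurj : Function.Surjective gA := by
    intro w
    by_cases hB : BackInf w.1
    · exact ⟨Sum.inl ⟨w.1, w.2, hB⟩, Subtype.ext rfl⟩
    by_cases hsq : IsSquare (w.1.1 ^ 2 - w.1.2 ^ 2)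
    · refine ⟨Sum.inr (Sum.inl ⟨(Φ w).1, (Φ w).2, (AdiffIff _ _ (hΦ w)).mpr hsq⟩), ?_⟩
      exact Auniq2 _ _ _ (hαadv _) (hαnB _) (hΦ w) hB
    · have hWnB : ¬ BackInf (Φ w).1 := fun hb => hsq ((AdiffIff _ _ (hΦ w)).mp hb)
      have hWsq : IsSquare ((Φ w).1.1 ^ 2 - (Φ w).1.2 ^ 2) := adv_diff_sq h2 (hΦ w)
      have hsB : BackInf (Φ (Φ w)).1 := (AdiffIff _ _ (hΦ (Φ w))).mpr hWsq
      have hαs : α ⟨(Φ (Φ w)).1, (Φ (Φ w)).2, hsB⟩ = Φ w := by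
        apply Auniq2 _ _ _ (hαadv _) (hαnB _) _ hWnB
        exact hΦ (Φ w)
      have hw2 : w = Pred ⟨(Φ (Φ w)).1, (Φ (Φ w)).2, hsB⟩ true ∨
          w = Pred ⟨(Φ (Φ w)).1, (Φ (Φ w)).2, hsB⟩ false := by
        apply hPcover _ w
        rw [hαs]
        exact hΦ w
      rcases hw2 with h | h
      · exact ⟨Sum.inr (Sum.inr (⟨(Φ (Φ w)).1, (Φ (Φ w)).2, hsB⟩, true)), h.symm⟩
      · exact ⟨Sum.inr (Sum.inr (⟨(Φ (Φ w)).1, (Φ (Φ w)).2, hsB⟩, false)), h.symm⟩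
  let eA := Equiv.ofBijective gA ⟨gAinj, gAsurj⟩
  -- conjugation equations
  have E1 : ∀ s, Ψ (eB (Sum.inl s)) = eB (Sum.inl (φP.symm s)) := by
    intro s
    exact Ψeq _ _ (hΨ (iX s))
  have E2 : ∀ s, Ψ (eB (Sum.inr (Sum.inl s))) = eB (Sum.inl s) := by
    intro s
    exact Ψeq _ _ (hβadv s)
  have E3 : ∀ s ε, Ψ (eB (Sum.inr (Sum.inr (s, ε)))) = eB (Sum.inr (Sum.inl s)) := by
    intro s ε
    exact Ψeq _ _ (hLadv s ε)
  have F1 : ∀ s, Φ (eA (Sum.inl s)) = eA (Sum.inl (φP s)) := by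
    intro s
    exact Φeq _ _ (hΦ (iY s))
  have F2 : ∀ s, Φ (eA (Sum.inr (Sum.inl s))) = eA (Sum.inl s) := by
    intro s
    exact Φeq _ _ (hαadv s)
  have F3 : ∀ s ε, Φ (eA (Sum.inr (Sum.inr (s, ε)))) = eA (Sum.inr (Sum.inl s)) := by
    intro s ε
    exact Φeq _ _ (hPadv s ε)
  obtain ⟨τ, hτ⟩ := conj2 Ψ Φ φP eB eA E1 E2 E3 F1 F2 F3
  refine ⟨τ, fun u v => ?_⟩
  constructor
  · intro h
    have hu : Ψ v = u := Ψeq v u h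
    rw [← hu, hτ v]
    exact hΦ (τ v)
  · intro h
    have h1 : Φ (τ v) = τ u := Φeq (τ v) (τ u) h
    rw [← hτ v] at h1
    have h2' := τ.injective h1
    rw [← h2']
    exact hΨ v

end Assemble

/-! ### The case `q ≡ 3 mod 4` -/

section Case3

variable {F : Type*} [Field F] [Fintype F]

lemma case3 (h2 : (2 : F) ≠ 0) (hn1 : ¬ IsSquare (-1 : F)) :
    ∃ τ : {p : F × F // BackInf p} ≃ {p : F × F // AdvInf p},
      ∀ u v : {p : F × F // BackInf p}, Adv u.1 v.1 ↔ Adv (τ v).1 (τ u).1 := by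
  -- one-step advancement within squares
  have stepA : ∀ p : F × F, Nontriv p → IsSquare (p.1 * p.2) →
      ∃ v, Adv p v ∧ (Nontriv v ∧ IsSquare (v.1 * v.2)) := by
    intro p hp hsq
    obtain ⟨d, hd⟩ := hsq
    have hd0 : d ≠ 0 := by
      rintro rfl; exact nontriv_prod_ne hp (by rw [hd, mul_zero])
    have hcc : 2 * ((p.1 + p.2) * (2 : F)⁻¹) = p.1 + p.2 := by field_simp
    have hd2 : d ^ 2 = p.1 * p.2 := by rw [sq]; exact hd.symm
    have hadv1 : Adv p ((p.1 + p.2) * (2 : F)⁻¹, d) := adv_of h2 hp hcc hd2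
    have hd2' : (-d) ^ 2 = p.1 * p.2 := by rw [← hd2]; ring
    have hadv2 : Adv p ((p.1 + p.2) * (2 : F)⁻¹, -d) := adv_of h2 hp hcc hd2'
    by_cases hs : IsSquare ((p.1 + p.2) * (2 : F)⁻¹ * d)
    · exact ⟨_, hadv1, hadv1.2.1, hs⟩
    · refine ⟨_, hadv2, hadv2.2.1, ?_⟩
      show IsSquare ((p.1 + p.2) * (2 : F)⁻¹ * -d)
      have heq : (p.1 + p.2) * (2 : F)⁻¹ * -d = -1 * ((p.1 + p.2) * (2 : F)⁻¹ * d) := by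
        ring
      rw [heq]
      exact nonsq_mul hn1 hs
  have stepB : ∀ p : F × F, Nontriv p → IsSquare (p.1 ^ 2 - p.2 ^ 2) →
      ∃ u, Adv u p ∧ (Nontriv u ∧ IsSquare (u.1 ^ 2 - u.2 ^ 2)) := by
    intro p hp hsq
    obtain ⟨x, hx⟩ := hsq
    have hx2 : x ^ 2 = p.1 ^ 2 - p.2 ^ 2 := by rw [sq]; exact hx.symm
    have hadv1 : Adv (p.1 + x, p.1 - x) p := pred_of h2 hp hx2
    have hadv2 : Adv (p.1 - x, p.1 + x) p := swap_adv hadv1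
    by_cases hs : IsSquare ((p.1 + x) ^ 2 - (p.1 - x) ^ 2)
    · exact ⟨_, hadv1, hadv1.1, hs⟩
    · refine ⟨_, hadv2, hadv2.1, ?_⟩
      show IsSquare ((p.1 - x) ^ 2 - (p.1 + x) ^ 2)
      have heq : (p.1 - x) ^ 2 - (p.1 + x) ^ 2 =
          -1 * ((p.1 + x) ^ 2 - (p.1 - x) ^ 2) := by ring
      rw [heq]
      exact nonsq_mul hn1 hs
  -- characterizations
  have keyA : ∀ (n : ℕ) (p : F × F), Nontriv p → IsSquare (p.1 * p.2) → AdvN n p := by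
    intro n
    induction n with
    | zero => intro p hp _; exact hp
    | succ n ih =>
        intro p hp hsq
        obtain ⟨v, hadv, hv1, hv2⟩ := stepA p hp hsq
        exact ⟨v, hadv, ih v hv1 hv2⟩
  have keyB : ∀ (n : ℕ) (p : F × F), Nontriv p → IsSquare (p.1 ^ 2 - p.2 ^ 2) → BackN n p := by
    intro n
    induction n with
    | zero => intro p hp _; exact hp
    | succ n ih =>
        intro p hp hsq
        obtain ⟨u, hadv, hu1, hu2⟩ := stepB p hp hsq
        exact ⟨u, hadv, ih u hu1 hu2⟩
  have cA : ∀ p : F × F, AdvInf p ↔ (Nontriv p ∧ IsSquare (p.1 * p.2)) := by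
    intro p
    constructor
    · intro h; exact ⟨h 0, advinf_prod_sq h⟩
    · rintro ⟨hp, hsq⟩ n; exact keyA n p hp hsq
  have cB : ∀ p : F × F, BackInf p ↔ (Nontriv p ∧ IsSquare (p.1 ^ 2 - p.2 ^ 2)) := by
    intro p
    constructor
    · intro h; exact ⟨h 0, backinf_diff_sq h2 h⟩
    · rintro ⟨hp, hsq⟩ n; exact keyB n p hp hsq
  apply assemble1 h2
  · -- UBex
    intro v hv
    obtain ⟨u, hadv, hu⟩ := stepB v (hv 0) (backinf_diff_sq h2 hv)
    exact ⟨u, hadv, (cB u).mpr hu⟩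
  · -- UAex
    intro u hu
    obtain ⟨v, hadv, hv⟩ := stepA u (hu 0) (advinf_prod_sq hu)
    exact ⟨v, hadv, (cA v).mpr hv⟩
  · -- UBuniq
    intro v u u' h hB h' hB'
    rcases preds_pair h h' with heq | heq
    · exact heq.symm
    · exfalso
      have hd1 : IsSquare (u.1 ^ 2 - u.2 ^ 2) := backinf_diff_sq h2 hB
      have hd2' : IsSquare (u'.1 ^ 2 - u'.2 ^ 2) := backinf_diff_sq h2 hB'
      rw [heq] at hd2'
      have hd2'' : IsSquare (-(u.1 ^ 2 - u.2 ^ 2)) := by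
        have : ((u.2, u.1) : F × F).1 ^ 2 - (u.2, u.1).2 ^ 2 = -(u.1 ^ 2 - u.2 ^ 2) := by
          show u.2 ^ 2 - u.1 ^ 2 = _; ring
        rwa [this] at hd2'
      exact neg_both hn1 (nontriv_diff_ne (h.1)) hd1 hd2''
  · -- UAuniq
    intro u v v' h hA h' hA'
    rcases succs_pair h2 h h' with heq | heq
    · exact heq.symm
    · exfalso
      have hd1 : IsSquare (v.1 * v.2) := advinf_prod_sq hA
      have hd2' : IsSquare (v'.1 * v'.2) := advinf_prod_sq hA'
      rw [heq] at hd2'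
      have hd2'' : IsSquare (-(v.1 * v.2)) := by
        have : ((v.1, -v.2) : F × F).1 * (v.1, -v.2).2 = -(v.1 * v.2) := by
          show v.1 * -v.2 = _; ring
        rwa [this] at hd2'
      exact neg_both hn1 (nontriv_prod_ne h.2.1) hd1 hd2''
  · -- Asucc
    intro u v h
    refine (cA u).mpr ⟨h.1, ⟨v.2, by linear_combination -h.2.2.2⟩⟩
  · -- Bpred
    intro u v h
    exact (cB v).mpr ⟨h.2.1, adv_diff_sq h2 h⟩

end Case3

/-! ### The case `q ≡ 5 mod 8` -/

section Case5

variable {F : Type*} [Field F] [Fintype F]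

lemma case5 (h2 : (2 : F) ≠ 0) (i : F) (hi : i * i = -1) (hins : ¬ IsSquare i) :
    ∃ τ : {p : F × F // BackInf p} ≃ {p : F × F // AdvInf p},
      ∀ u v : {p : F × F // BackInf p}, Adv u.1 v.1 ↔ Adv (τ v).1 (τ u).1 := by
  have hi0 : i ≠ 0 := by
    rintro rfl
    exact one_ne_zero (by linear_combination hi : (1 : F) = 0)
  -- fourth power criterion
  have K1 : ∀ z : F, z ≠ 0 → ((∃ y : F, z ^ 2 = y ^ 4) ↔ IsSquare z) := by
    intro z hz
    constructor
    · rintro ⟨y, hy⟩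
      have hfac : (z - y ^ 2) * (z + y ^ 2) = 0 := by linear_combination hy
      rcases mul_eq_zero.mp hfac with hc | hc
      · exact ⟨y, by linear_combination hc⟩
      · exact ⟨i * y, by linear_combination hc - y ^ 2 * hi⟩
    · rintro ⟨r, hr⟩
      exact ⟨r, by rw [hr]; ring⟩
  have nonsq_i_sq : ∀ t : F, t ≠ 0 → ¬ IsSquare (i * (t * t)) := by
    intro t ht hsq
    exact hins (sqdiv (mul_ne_zero ht ht) ⟨t, rfl⟩ (by rwa [mul_comm] at hsq))
  -- one-step lemmas
  have stepB : ∀ p : F × F, Nontriv p → (∃ y : F, p.1 ^ 2 * (p.1 ^ 2 - p.2 ^ 2) = y ^ 4) →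
      ∃ u, Adv u p ∧ (Nontriv u ∧ ∃ y : F, u.1 ^ 2 * (u.1 ^ 2 - u.2 ^ 2) = y ^ 4) := by
    rintro p hp ⟨y, hy⟩
    have hdiff : p.1 ^ 2 - p.2 ^ 2 ≠ 0 := nontriv_diff_ne hp
    have hp1 : p.1 ≠ 0 := hp.1
    have hy0 : y ≠ 0 := by
      rintro rfl
      rcases mul_eq_zero.mp (by rw [hy]; ring : p.1 ^ 2 * (p.1 ^ 2 - p.2 ^ 2) = 0) with hc | hc
      · exact hp1 ((pow_eq_zero_iff (by norm_num : (2:ℕ) ≠ 0)).mp hc)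
      · exact hdiff hc
    set x : F := y ^ 2 * p.1⁻¹ with hxdef
    have hpx : p.1 * x = y ^ 2 := by rw [hxdef]; field_simp [h2]
    have hx2 : x ^ 2 = p.1 ^ 2 - p.2 ^ 2 := by
      rw [hxdef]
      field_simp [h2]
      linear_combination -hy
    have hadv1 : Adv (p.1 + x, p.1 - x) p := pred_of h2 hp hx2
    have hadv2 : Adv (p.1 - x, p.1 + x) p := swap_adv hadv1
    have hprodns : ¬ IsSquare (((p.1 + x) * (2 * y)) * (i * ((p.1 - x) * (2 * y)))) := by
      have hprodeq : ((p.1 + x) * (2 * y)) * (i * ((p.1 - x) * (2 * y))) =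
          i * ((2 * y * p.2) * (2 * y * p.2)) := by
        linear_combination (-4 * i * y ^ 2) * hx2
      rw [hprodeq]
      exact nonsq_i_sq _ (mul_ne_zero (mul_ne_zero h2 hy0) hp.2.1)
    by_cases hcase : IsSquare ((p.1 + x) * (2 * y))
    · obtain ⟨r, hr⟩ := hcase
      refine ⟨_, hadv1, hadv1.1, ⟨r, ?_⟩⟩
      show (p.1 + x) ^ 2 * ((p.1 + x) ^ 2 - (p.1 - x) ^ 2) = r ^ 4
      linear_combination (4 * (p.1 + x) ^ 2) * hpx + ((p.1 + x) * (2 * y) + r * r) * hr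
    · have hcase2 : IsSquare (i * ((p.1 - x) * (2 * y))) := by
        by_contra hn
        exact hcase ((xor_of_nonsq hprodns).mpr hn)
      obtain ⟨r, hr⟩ := hcase2
      refine ⟨_, hadv2, hadv2.1, ⟨r, ?_⟩⟩
      show (p.1 - x) ^ 2 * ((p.1 - x) ^ 2 - (p.1 + x) ^ 2) = r ^ 4
      linear_combination (-4 * (p.1 - x) ^ 2) * hpx +
        (i * ((p.1 - x) * (2 * y)) + r * r) * hr + (-4 * y ^ 2 * (p.1 - x) ^ 2) * hi
  have stepA : ∀ p : F × F, Nontriv p →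
      (∃ y : F, 4 * (p.1 * p.2) * (p.1 + p.2) ^ 2 = y ^ 4) →
      ∃ v, Adv p v ∧ (Nontriv v ∧ ∃ y : F, 4 * (v.1 * v.2) * (v.1 + v.2) ^ 2 = y ^ 4) := by
    rintro p hp ⟨y, hy⟩
    have hs0 : p.1 + p.2 ≠ 0 := hp.2.2.1
    have h40 : (4 : F) ≠ 0 := by
      have h22 : (4 : F) = 2 * 2 := by norm_num
      rw [h22]; exact mul_ne_zero h2 h2
    have hy0 : y ≠ 0 := by
      rintro rfl
      have h0 : 4 * (p.1 * p.2) * (p.1 + p.2) ^ 2 = 0 := by rw [hy]; ring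
      rcases mul_eq_zero.mp h0 with hc | hc
      · rcases mul_eq_zero.mp hc with hc' | hc'
        · exact h40 hc'
        · exact nontriv_prod_ne hp hc'
      · exact hs0 ((pow_eq_zero_iff (by norm_num : (2:ℕ) ≠ 0)).mp hc)
    have h2s0 : 2 * (p.1 + p.2) ≠ 0 := mul_ne_zero h2 hs0
    set c : F := (p.1 + p.2) / 2 with hcdef
    set d : F := y ^ 2 / (2 * (p.1 + p.2)) with hddef
    have hcc : 2 * c = p.1 + p.2 := by rw [hcdef]; field_simp [h2]
    have hd2 : d ^ 2 = p.1 * p.2 := by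
      rw [hddef, div_pow, div_eq_iff (pow_ne_zero 2 h2s0)]
      linear_combination -hy
    have h4cd : 4 * (c * d) = y ^ 2 := by
      rw [hcdef, hddef, div_mul_div_comm, ← mul_div_assoc,
        div_eq_iff (mul_ne_zero h2 h2s0)]
      ring
    have hadv1 : Adv p (c, d) := adv_of h2 hp hcc hd2
    have hadv2 : Adv p (c, -d) := adv_of h2 hp hcc (by linear_combination hd2)
    have hcd : 4 * (c ^ 2 - d ^ 2) = (p.1 - p.2) ^ 2 := by
      linear_combination (2 * c + p.1 + p.2) * hcc - 4 * hd2
    have hprodns : ¬ IsSquare ((y * (c + d)) * (i * (y * (c - d)))) := by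
      have hprodeq : (y * (c + d)) * (i * (y * (c - d))) =
          i * ((y * (p.1 - p.2) * (2 : F)⁻¹) * (y * (p.1 - p.2) * (2 : F)⁻¹)) := by
        clear_value c d
        field_simp [h2]
        linear_combination hcd
      rw [hprodeq]
      exact nonsq_i_sq _
        (mul_ne_zero (mul_ne_zero hy0 hp.2.2.2) (inv_ne_zero h2))
    by_cases hcase : IsSquare (y * (c + d))
    · obtain ⟨r, hr⟩ := hcase
      refine ⟨_, hadv1, hadv1.2.1, ⟨r, ?_⟩⟩
      show 4 * (c * d) * (c + d) ^ 2 = r ^ 4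
      linear_combination ((c + d) ^ 2) * h4cd + (y * (c + d) + r * r) * hr
    · have hcase2 : IsSquare (i * (y * (c - d))) := by
        by_contra hn
        exact hcase ((xor_of_nonsq hprodns).mpr hn)
      obtain ⟨r, hr⟩ := hcase2
      refine ⟨_, hadv2, hadv2.2.1, ⟨r, ?_⟩⟩
      show 4 * (c * -d) * (c + -d) ^ 2 = r ^ 4
      linear_combination (-(c - d) ^ 2) * h4cd + (i * (y * (c - d)) + r * r) * hr +
        (-(y ^ 2) * (c - d) ^ 2) * hi
  -- characterizations
  have keyB : ∀ (n : ℕ) (p : F × F), Nontriv p →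
      (∃ y : F, p.1 ^ 2 * (p.1 ^ 2 - p.2 ^ 2) = y ^ 4) → BackN n p := by
    intro n
    induction n with
    | zero => intro p hp _; exact hp
    | succ n ih =>
        intro p hp hq
        obtain ⟨u, hadv, hu1, hu2⟩ := stepB p hp hq
        exact ⟨u, hadv, ih u hu1 hu2⟩
  have keyA : ∀ (n : ℕ) (p : F × F), Nontriv p →
      (∃ y : F, 4 * (p.1 * p.2) * (p.1 + p.2) ^ 2 = y ^ 4) → AdvN n p := by
    intro n
    induction n with
    | zero => intro p hp _; exact hp
    | succ n ih =>
        intro p hp hq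
        obtain ⟨v, hadv, hv1, hv2⟩ := stepA p hp hq
        exact ⟨v, hadv, ih v hv1 hv2⟩
  have cB : ∀ p : F × F, BackInf p ↔
      (Nontriv p ∧ ∃ y : F, p.1 ^ 2 * (p.1 ^ 2 - p.2 ^ 2) = y ^ 4) := by
    intro p
    constructor
    · intro h
      refine ⟨h 0, ?_⟩
      obtain ⟨u, hu, hub⟩ := h 2
      obtain ⟨w, hw, -⟩ := hub
      obtain ⟨r, hr⟩ := adv_diff_sq h2 hw
      refine ⟨r / 2, ?_⟩
      have hfst := hu.2.2.1
      have hsnd := hu.2.2.2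
      have h24 : ((2 : F)) ^ 4 ≠ 0 := pow_ne_zero 4 h2
      rw [div_pow, eq_div_iff h24]
      linear_combination ((2 * p.1 + u.1 + u.2) * (4 * p.1 ^ 2 + (u.1 + u.2) ^ 2) -
        4 * p.2 ^ 2 * (2 * p.1 + u.1 + u.2)) * hfst +
        (-4 * (u.1 + u.2) ^ 2) * hsnd + (u.1 ^ 2 - u.2 ^ 2 + r * r) * hr
    · rintro ⟨hp, hq⟩ n
      exact keyB n p hp hq
  have cA : ∀ p : F × F, AdvInf p ↔
      (Nontriv p ∧ ∃ y : F, 4 * (p.1 * p.2) * (p.1 + p.2) ^ 2 = y ^ 4) := by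
    intro p
    constructor
    · intro h
      refine ⟨h 0, ?_⟩
      obtain ⟨v, hv, hva⟩ := h 2
      obtain ⟨z, hz, -⟩ := hva
      refine ⟨2 * z.2, ?_⟩
      have h1 : p.1 + p.2 = 2 * v.1 := hv.2.2.1.symm
      rw [h1, ← hv.2.2.2]
      linear_combination (-16 * (z.2 ^ 2 + v.1 * v.2)) * hz.2.2.2
    · rintro ⟨hp, hq⟩ n
      exact keyA n p hp hq
  -- transfer lemmas
  have BprodIff : ∀ u v : F × F, Adv u v → (AdvInf u ↔ IsSquare (v.1 * v.2)) := by
    intro u v h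
    constructor
    · intro hA
      obtain ⟨-, y, hy⟩ := (cA u).mp hA
      rw [← h.2.2.2, ← h.2.2.1] at hy
      have hz : (4 * (v.1 * v.2)) ^ 2 = y ^ 4 := by linear_combination hy
      have h40 : 4 * (v.1 * v.2) ≠ 0 := by
        have h22 : (4 : F) = 2 * 2 := by norm_num
        rw [h22]
        exact mul_ne_zero (mul_ne_zero h2 h2) (nontriv_prod_ne h.2.1)
      have hsq4 := (K1 _ h40).mp ⟨y, hz⟩
      have h22 : (4 : F) = 2 * 2 := by norm_num
      rw [h22] at hsq4
      exact sqdiv (mul_ne_zero h2 h2) ⟨2, rfl⟩ hsq4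
    · rintro ⟨r, hr⟩
      refine (cA u).mpr ⟨h.1, ⟨2 * r, ?_⟩⟩
      rw [← h.2.2.2, ← h.2.2.1]
      linear_combination (16 * (v.1 * v.2 + r * r)) * hr
  have AdiffIff : ∀ u v : F × F, Adv u v → (BackInf v ↔ IsSquare (u.1 ^ 2 - u.2 ^ 2)) := by
    intro u v h
    have h24 : ((2 : F)) ^ 4 ≠ 0 := pow_ne_zero 4 h2
    have hid : v.1 ^ 2 * (v.1 ^ 2 - v.2 ^ 2) = (u.1 ^ 2 - u.2 ^ 2) ^ 2 / (2 : F) ^ 4 := by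
      rw [eq_div_iff h24]
      linear_combination ((2 * v.1 + u.1 + u.2) * (4 * v.1 ^ 2 + (u.1 + u.2) ^ 2) -
        4 * v.2 ^ 2 * (2 * v.1 + u.1 + u.2)) * h.2.2.1 +
        (-4 * (u.1 + u.2) ^ 2) * h.2.2.2
    have hZ0 : (u.1 ^ 2 - u.2 ^ 2) / (2 : F) ^ 2 ≠ 0 :=
      div_ne_zero (nontriv_diff_ne h.1) (pow_ne_zero 2 h2)
    constructor
    · intro hB
      obtain ⟨-, y, hy⟩ := (cB v).mp hB
      rw [hid] at hy
      have hz2 : ((u.1 ^ 2 - u.2 ^ 2) / (2 : F) ^ 2) ^ 2 = y ^ 4 := by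
        rw [div_pow, show ((2 : F) ^ 2) ^ 2 = (2 : F) ^ 4 from by ring]
        exact hy
      obtain ⟨r, hr⟩ := (K1 _ hZ0).mp ⟨y, hz2⟩
      rw [div_eq_iff (pow_ne_zero 2 h2)] at hr
      exact ⟨2 * r, by linear_combination hr⟩
    · rintro ⟨r, hr⟩
      refine (cB v).mpr ⟨h.2.1, ⟨r / 2, ?_⟩⟩
      rw [hid, hr, div_pow, div_eq_div_iff h24 (pow_ne_zero 4 h2)]
      ring
  apply assemble2 h2
  · -- UBex
    intro v hv
    obtain ⟨hnt, hq⟩ := (cB v).mp hv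
    obtain ⟨u, hadv, hu⟩ := stepB v hnt hq
    exact ⟨u, hadv, (cB u).mpr hu⟩
  · -- UAex
    intro u hu
    obtain ⟨hnt, hq⟩ := (cA u).mp hu
    obtain ⟨v, hadv, hv⟩ := stepA u hnt hq
    exact ⟨v, hadv, (cA v).mpr hv⟩
  · -- UBuniq
    intro v u u' h hB h' hB'
    rcases preds_pair h h' with heq | heq
    · exact heq.symm
    · exfalso
      obtain ⟨-, y, hy⟩ := (cB u).mp hB
      obtain ⟨-, y', hy'⟩ := (cB u').mp hB'
      rw [heq] at hy'
      have hy'' : u.2 ^ 2 * (u.2 ^ 2 - u.1 ^ 2) = y' ^ 4 := hy'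
      have hWsq : IsSquare ((u.1 * u.2) * (u.1 ^ 2 - u.2 ^ 2)) :=
        sqmul ⟨v.2, by linear_combination -h.2.2.2⟩ (backinf_diff_sq h2 hB)
      have hW0 : (u.1 * u.2) * (u.1 ^ 2 - u.2 ^ 2) ≠ 0 :=
        mul_ne_zero (nontriv_prod_ne h.1) (nontriv_diff_ne h.1)
      have hprod : (i * ((u.1 * u.2) * (u.1 ^ 2 - u.2 ^ 2))) ^ 2 = (y * y') ^ 4 := by
        linear_combination (((u.1 * u.2) * (u.1 ^ 2 - u.2 ^ 2)) ^ 2) * hi +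
          (u.2 ^ 2 * (u.2 ^ 2 - u.1 ^ 2)) * hy + (y ^ 4) * hy''
      have hiW : IsSquare (i * ((u.1 * u.2) * (u.1 ^ 2 - u.2 ^ 2))) :=
        (K1 _ (mul_ne_zero hi0 hW0)).mp ⟨y * y', hprod⟩
      exact hins (sqdiv hW0 hWsq (by rwa [mul_comm] at hiW))
  · -- UAuniq
    intro u v v' h hA h' hA'
    rcases succs_pair h2 h h' with heq | heq
    · exact heq.symm
    · exfalso
      obtain ⟨-, y, hy⟩ := (cA v).mp hA
      obtain ⟨-, y', hy'⟩ := (cA v').mp hA'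
      rw [heq] at hy'
      have hy'' : 4 * (v.1 * -v.2) * (v.1 + -v.2) ^ 2 = y' ^ 4 := hy'
      have hWsq : IsSquare ((2 * 2) * ((v.1 * v.2) * (v.1 ^ 2 - v.2 ^ 2))) :=
        sqmul ⟨2, rfl⟩ (sqmul (advinf_prod_sq hA) (adv_diff_sq h2 h))
      have hW0 : (2 * 2) * ((v.1 * v.2) * (v.1 ^ 2 - v.2 ^ 2)) ≠ 0 :=
        mul_ne_zero (mul_ne_zero h2 h2)
          (mul_ne_zero (nontriv_prod_ne h.2.1) (nontriv_diff_ne h.2.1))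
      have hprod : (i * ((2 * 2) * ((v.1 * v.2) * (v.1 ^ 2 - v.2 ^ 2)))) ^ 2 =
          (y * y') ^ 4 := by
        linear_combination (((2 * 2) * ((v.1 * v.2) * (v.1 ^ 2 - v.2 ^ 2))) ^ 2) * hi +
          (4 * (v.1 * -v.2) * (v.1 + -v.2) ^ 2) * hy + (y ^ 4) * hy''
      have hiW : IsSquare (i * ((2 * 2) * ((v.1 * v.2) * (v.1 ^ 2 - v.2 ^ 2)))) :=
        (K1 _ (mul_ne_zero hi0 hW0)).mp ⟨y * y', hprod⟩
      exact hins (sqdiv hW0 hWsq (by rwa [mul_comm] at hiW))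
  · -- BprodIff
    exact BprodIff
  · -- AdiffIff
    exact AdiffIff

end Case5

end AGMProof

theorem stmt19 {F : Type*} [Field F] [Fintype F] (q : ℕ)
    (hq : Fintype.card F = q) (hmod : q % 4 = 3 ∨ q % 8 = 5) :
    ∃ τ : {p : F × F // AGM.BackInf p} ≃ {p : F × F // AGM.AdvInf p},
      ∀ u v : {p : F × F // AGM.BackInf p},
        AGM.Adv u.1 v.1 ↔ AGM.Adv (τ v).1 (τ u).1 := by
  classical
  subst hq
  have hodd : Fintype.card F % 2 = 1 := by rcases hmod with h | h <;> omega
  have hchar : ringChar F ≠ 2 := by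
    intro hc
    have := FiniteField.even_card_of_char_two hc
    omega
  have h2 : (2 : F) ≠ 0 := Ring.two_ne_zero hchar
  rcases hmod with h3 | h5
  · have hn1 : ¬ IsSquare (-1 : F) := by
      rw [FiniteField.isSquare_neg_one_iff]
      push_neg
      exact h3
    exact AGMProof.case3 h2 hn1
  · have hs1 : IsSquare (-1 : F) := by
      rw [FiniteField.isSquare_neg_one_iff]
      omega
    obtain ⟨j, hj⟩ := hs1
    have hi : j * j = -1 := hj.symm
    have hins : ¬ IsSquare j := by
      rintro ⟨w, hw⟩
      have hw0 : w ≠ 0 := by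
        rintro rfl
        rw [hw] at hi
        exact one_ne_zero (by linear_combination hi : (1 : F) = 0)
      have hw4 : w ^ 4 = -1 := by
        rw [hw] at hi
        linear_combination hi
      have hw8 : w ^ 8 = 1 := by
        rw [show (8 : ℕ) = 4 * 2 from rfl, pow_mul, hw4]
        ring
      set u : Fˣ := Units.mk0 w hw0 with hudef
      have huv : (u : F) = w := rfl
      have hu8 : u ^ 8 = 1 := by
        apply Units.ext
        rw [Units.val_pow_eq_pow_val, huv, hw8, Units.val_one]
      have hu4 : u ^ 4 ≠ 1 := by
        intro hc
        have hval := congrArg Units.val hc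
        rw [Units.val_pow_eq_pow_val, huv, Units.val_one, hw4] at hval
        exact h2 (by linear_combination -hval)
      have hdvd : orderOf u ∣ 8 := orderOf_dvd_of_pow_eq_one hu8
      have hndvd : ¬ orderOf u ∣ 4 := fun hd => hu4 (orderOf_dvd_iff_pow_eq_one.mp hd)
      have horder : orderOf u = 8 := by
        have h1 : orderOf u ≤ 8 := Nat.le_of_dvd (by norm_num) hdvd
        have h0 : 0 < orderOf u := orderOf_pos u
        interval_cases hou : orderOf u <;>
          first
            | rfl
            | (exfalso; revert hdvd hndvd; decide)
      have hcard : (8 : ℕ) ∣ Fintype.card Fˣ := horder ▸ orderOf_dvd_card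
      rw [Fintype.card_units] at hcard
      have hpos : 0 < Fintype.card F := Fintype.card_pos
      omega
    exact AGMProof.case5 h2 j hi hins
end
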